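/- arXiv:q-alg/9504001 — 8 statements merged into one kernel-verified Lean document; each statement's English description precedes it below -/
import Mathlib

section
/- Define, for every object A of C, D(A) := ∑_{i,j ∈ I} finrank_K Hom(A ⊗ X_i, X_j). Then for all objects A and B of C the weak dimension inequality holds: D(A) · D(B) ≥ ∑_{k ∈ I} finrank_K Hom(A ⊗ B, X_k) · D(X_k). -/
open CategoryTheory CategoryTheory.Limits Module MonoidalCategory

attribute [local instance] CategoryTheory.Abelian.hasFiniteBiproducts

universe v u

section Aux

variable (K : Type*) [Field K]
    (C : Type u) [Category.{v} C] [Abelian C] [Linear K C]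

/-- Hom out of a finite biproduct is linearly equivalent to the product of Homs. -/
noncomputable def biproductHomLequiv {n : ℕ} (S : Fin n → C) (T : C) :
    ((⨁ S) ⟶ T) ≃ₗ[K] ∀ p, (S p ⟶ T) where
  toFun f p := biproduct.ι S p ≫ f
  map_add' f g := by funext p; simp
  map_smul' c f := by funext p; simp
  invFun g := biproduct.desc g
  left_inv f := by ext p; simp
  right_inv g := by funext p; simp

theorem finrank_biproduct_hom (hfd : ∀ A B : C, FiniteDimensional K (A ⟶ B))
    {n : ℕ} (S : Fin n → C) (T : C) :
    finrank K ((⨁ S) ⟶ T) = ∑ p, finrank K (S p ⟶ T) := by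
  haveI : ∀ p, FiniteDimensional K (S p ⟶ T) := fun p => hfd _ _
  rw [(biproductHomLequiv K C S T).finrank_eq, Module.finrank_pi_fintype]

theorem finrank_iso_hom {Y Y' T : C} (e : Y ≅ Y') :
    finrank K (Y ⟶ T) = finrank K (Y' ⟶ T) :=
  (Linear.homCongr K e (Iso.refl T)).finrank_eq

end Aux

theorem weak_dimension_inequality
    (K : Type*) [Field K]
    (C : Type u) [Category.{v} C] [Abelian C] [Linear K C]
    [MonoidalCategory C] [BraidedCategory C]
    [MonoidalPreadditive C] [MonoidalLinear K C]
    (hfd : ∀ A B : C, FiniteDimensional K (A ⟶ B))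
    (hss : ∀ A : C, ∃ (n : ℕ) (S : Fin n → C),
      (∀ p, Simple (S p)) ∧ Nonempty (A ≅ ⨁ S))
    (hend : ∀ Z : C, Simple Z → finrank K (Z ⟶ Z) = 1)
    (ι : Type) [Fintype ι] (X : ι → C) (hsimple : ∀ i, Simple (X i))
    (hne : ∀ i j : ι, i ≠ j → ¬ Nonempty (X i ≅ X j))
    (hcover : ∀ Z : C, Simple Z → ∃ i, Nonempty (Z ≅ X i))
    (D : C → ℕ) (hD : ∀ A : C, D A = ∑ i, ∑ j, finrank K ((A ⊗ X i : C) ⟶ X j))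
    (A B : C) :
    ∑ k, finrank K ((A ⊗ B : C) ⟶ X k) * D (X k) ≤ D A * D B := by
  classical
  -- Schur orthogonality for the chosen simples
  have hschur : ∀ i k : ι, finrank K (X i ⟶ X k) = if i = k then 1 else 0 := by
    intro i k
    by_cases h : i = k
    · subst h; simp [hend _ (hsimple i)]
    · rw [if_neg h]
      haveI := hsimple i; haveI := hsimple k
      have hz : ∀ f : X i ⟶ X k, f = 0 := by
        intro f
        by_contra hf
        haveI := isIso_of_hom_simple hf
        exact hne i k h ⟨asIso f⟩
      haveI : Subsingleton (X i ⟶ X k) := ⟨fun f g => by rw [hz f, hz g]⟩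
      exact Module.finrank_zero_of_subsingleton
  -- Key decomposition lemma for functors preserving finite biproducts
  have key : ∀ (F : C ⥤ C) [F.Additive] [PreservesFiniteBiproducts F] (Y Z : C),
      finrank K (F.obj Y ⟶ Z)
        = ∑ k, finrank K (Y ⟶ X k) * finrank K (F.obj (X k) ⟶ Z) := by
    intro F _ _ Y Z
    obtain ⟨n, S, hSp, ⟨e⟩⟩ := hss Y
    choose idx hidx using fun p => hcover (S p) (hSp p)
    let e2 : Y ≅ ⨁ (fun p => X (idx p)) :=
      e ≪≫ biproduct.mapIso (fun p => Classical.choice (hidx p))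
    have hmult : ∀ k, finrank K (Y ⟶ X k) = ∑ p, if idx p = k then 1 else 0 := by
      intro k
      rw [finrank_iso_hom K C e2, finrank_biproduct_hom K C hfd]
      exact Finset.sum_congr rfl fun p _ => hschur (idx p) k
    have hFY : finrank K (F.obj Y ⟶ Z) = ∑ p, finrank K (F.obj (X (idx p)) ⟶ Z) := by
      rw [finrank_iso_hom K C (F.mapIso e2),
        finrank_iso_hom K C (F.mapBiproduct (fun p => X (idx p))),
        finrank_biproduct_hom K C hfd]
      rfl
    calc finrank K (F.obj Y ⟶ Z)
        = ∑ p, finrank K (F.obj (X (idx p)) ⟶ Z) := hFY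
      _ = ∑ p, ∑ k, (if idx p = k then 1 else 0) * finrank K (F.obj (X k) ⟶ Z) := by
          refine Finset.sum_congr rfl fun p _ => ?_
          simp [ite_mul, Finset.sum_ite_eq]
      _ = ∑ k, (∑ p, if idx p = k then 1 else 0) * finrank K (F.obj (X k) ⟶ Z) := by
          rw [Finset.sum_comm]
          exact Finset.sum_congr rfl fun k _ => (Finset.sum_mul _ _ _).symm
      _ = ∑ k, finrank K (Y ⟶ X k) * finrank K (F.obj (X k) ⟶ Z) :=
          Finset.sum_congr rfl fun k _ => by rw [hmult k]
  -- pointwise decompositions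
  have step1 : ∀ i j : ι, finrank K (((A ⊗ B) ⊗ X i : C) ⟶ X j)
      = ∑ k, finrank K ((A ⊗ B : C) ⟶ X k) * finrank K ((X k ⊗ X i : C) ⟶ X j) :=
    fun i j => key (tensorRight (X i)) (A ⊗ B) (X j)
  have step2 : ∀ i j : ι, finrank K (((A ⊗ B) ⊗ X i : C) ⟶ X j)
      = ∑ k, finrank K ((B ⊗ X i : C) ⟶ X k) * finrank K ((A ⊗ X k : C) ⟶ X j) := by
    intro i j
    rw [finrank_iso_hom K C (α_ A B (X i))]
    exact key (tensorLeft A) (B ⊗ X i) (X j)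
  have hDA_ge : ∀ k : ι, ∑ j, finrank K ((A ⊗ X k : C) ⟶ X j) ≤ D A := by
    intro k
    rw [hD A]
    exact Finset.single_le_sum (f := fun k => ∑ j, finrank K ((A ⊗ X k : C) ⟶ X j))
      (fun _ _ => Nat.zero_le _) (Finset.mem_univ k)
  calc ∑ k, finrank K ((A ⊗ B : C) ⟶ X k) * D (X k)
      = ∑ k, ∑ i, ∑ j, finrank K ((A ⊗ B : C) ⟶ X k)
          * finrank K ((X k ⊗ X i : C) ⟶ X j) := by
        refine Finset.sum_congr rfl fun k _ => ?_
        rw [hD (X k), Finset.mul_sum]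
        exact Finset.sum_congr rfl fun i _ => Finset.mul_sum _ _ _
    _ = ∑ i, ∑ j, ∑ k, finrank K ((A ⊗ B : C) ⟶ X k)
          * finrank K ((X k ⊗ X i : C) ⟶ X j) := by
        rw [Finset.sum_comm]
        exact Finset.sum_congr rfl fun i _ => Finset.sum_comm
    _ = ∑ i, ∑ j, finrank K (((A ⊗ B) ⊗ X i : C) ⟶ X j) :=
        Finset.sum_congr rfl fun i _ => Finset.sum_congr rfl fun j _ => (step1 i j).symm
    _ = ∑ i, ∑ j, ∑ k, finrank K ((B ⊗ X i : C) ⟶ X k)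
          * finrank K ((A ⊗ X k : C) ⟶ X j) :=
        Finset.sum_congr rfl fun i _ => Finset.sum_congr rfl fun j _ => step2 i j
    _ = ∑ i, ∑ k, finrank K ((B ⊗ X i : C) ⟶ X k)
          * ∑ j, finrank K ((A ⊗ X k : C) ⟶ X j) := by
        refine Finset.sum_congr rfl fun i _ => ?_
        rw [Finset.sum_comm]
        exact Finset.sum_congr rfl fun k _ => (Finset.mul_sum _ _ _).symm
    _ ≤ ∑ i, ∑ k, finrank K ((B ⊗ X i : C) ⟶ X k) * D A :=
        Finset.sum_le_sum fun i _ => Finset.sum_le_sum fun k _ =>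
          Nat.mul_le_mul_left _ (hDA_ge k)
    _ = (∑ i, ∑ k, finrank K ((B ⊗ X i : C) ⟶ X k)) * D A := by
        rw [Finset.sum_mul]
        exact Finset.sum_congr rfl fun i _ => (Finset.sum_mul _ _ _).symm
    _ = D B * D A := by rw [hD B]
    _ = D A * D B := Nat.mul_comm _ _
end

section
/- Let D : I → ℕ be a weak dimension function, i.e.: D(i) ≥ 1 for all i; D(i₀) = 1 for the index i₀ with X_{i₀} ≅ 𝟙 (the tensor unit); and for all i, j ∈ I: D(i) · D(j) ≥ ∑_{k ∈ I} finrank_K Hom(X_i ⊗ X_j, X_k) · D(k). Then there exist a faithful K-linear functor F from C to the category of K-vector spaces with finrank_K F(A) = ∑_{i ∈ I} finrank_K Hom(X_i, A) · D(i) for every object A, together with a family of surjective K-linear maps c_{A,B} : F(A) ⊗ F(B) → F(A ⊗ B) that is natural in both variables (i.e. F(f ⊗ g) ∘ c_{A,B} = c_{A',B'} ∘ (F(f) ⊗ F(g)) for all f : A ⟶ A', g : B ⟶ B') and such that c_{𝟙,A} and c_{A,𝟙} are bijective for every object A. -/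
open CategoryTheory CategoryTheory.Limits Module MonoidalCategory

attribute [local instance] CategoryTheory.Abelian.hasFiniteBiproducts

universe v u w

section WQTAux

variable (K : Type w) [Field K] {C : Type u} [Category.{v} C] [Abelian C] [Linear K C]

/-- maps out of a finite biproduct -/
noncomputable def wqtHomFromBiproduct {σ : Type} [Fintype σ] (Z : σ → C) (A : C) :
    ((⨁ Z) ⟶ A) ≃ₗ[K] ∀ p, (Z p ⟶ A) where
  toFun w p := biproduct.ι Z p ≫ w
  map_add' w w' := by funext p; simp
  map_smul' s w := by funext p; simp
  invFun v := biproduct.desc v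
  left_inv w := by apply biproduct.hom_ext'; intro p; simp
  right_inv v := by funext p; simp

noncomputable def wqtHomToBiproduct {σ : Type} [Fintype σ] (Z : σ → C) (A : C) :
    (A ⟶ (⨁ Z)) ≃ₗ[K] ∀ p, (A ⟶ Z p) where
  toFun w p := w ≫ biproduct.π Z p
  map_add' w w' := by funext p; simp
  map_smul' s w := by funext p; simp
  invFun v := biproduct.lift v
  left_inv w := by apply biproduct.hom_ext; intro p; simp
  right_inv v := by funext p; simp



lemma wqt_finrank_hom_eq_one (hend : ∀ Z : C, Simple Z → finrank K (Z ⟶ Z) = 1)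
    {Z W : C} (hZ : Simple Z) (e : Z ≅ W) : finrank K (Z ⟶ W) = 1 := by
  rw [(Linear.homCongr K (Iso.refl Z) e.symm).finrank_eq]
  exact hend Z hZ

lemma wqt_finrank_hom_eq_zero {Z W : C} (hZ : Simple Z) (hW : Simple W)
    (h : ¬ Nonempty (Z ≅ W)) : finrank K (Z ⟶ W) = 0 := by
  haveI := hZ; haveI := hW
  have hzero : ∀ f : Z ⟶ W, f = 0 := by
    intro f
    by_contra hf
    exact h ⟨@asIso _ _ _ _ f (isIso_of_hom_simple hf)⟩
  haveI : Subsingleton (Z ⟶ W) := ⟨fun f g => (hzero f).trans (hzero g).symm⟩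
  exact Module.finrank_zero_of_subsingleton

lemma wqt_finrank_hom_symm (hend : ∀ Z : C, Simple Z → finrank K (Z ⟶ Z) = 1)
    {Z W : C} (hZ : Simple Z) (hW : Simple W) :
    finrank K (Z ⟶ W) = finrank K (W ⟶ Z) := by
  by_cases h : Nonempty (Z ≅ W)
  · obtain ⟨e⟩ := h
    rw [wqt_finrank_hom_eq_one K hend hZ e, wqt_finrank_hom_eq_one K hend hW e.symm]
  · rw [wqt_finrank_hom_eq_zero K hZ hW h,
      wqt_finrank_hom_eq_zero K hW hZ (fun ⟨e⟩ => h ⟨e.symm⟩)]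

lemma wqt_finrank_flip (hfd : ∀ A B : C, FiniteDimensional K (A ⟶ B))
    (hend : ∀ Z : C, Simple Z → finrank K (Z ⟶ Z) = 1)
    (hss : ∀ A : C, ∃ (n : ℕ) (S : Fin n → C),
      (∀ p, Simple (S p)) ∧ Nonempty (A ≅ ⨁ S))
    {W : C} (hW : Simple W) (A : C) :
    finrank K (W ⟶ A) = finrank K (A ⟶ W) := by
  obtain ⟨n, S, hS, ⟨e⟩⟩ := hss A
  haveI : ∀ p, FiniteDimensional K (W ⟶ S p) := fun p => hfd _ _
  haveI : ∀ p, FiniteDimensional K (S p ⟶ W) := fun p => hfd _ _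
  calc finrank K (W ⟶ A) = finrank K (W ⟶ ⨁ S) :=
        (Linear.homCongr K (Iso.refl W) e).finrank_eq
    _ = ∑ p, finrank K (W ⟶ S p) :=
        (wqtHomToBiproduct K S W).finrank_eq.trans (Module.finrank_pi_fintype K)
    _ = ∑ p, finrank K (S p ⟶ W) :=
        Finset.sum_congr rfl fun p _ => wqt_finrank_hom_symm K hend hW (hS p)
    _ = finrank K ((⨁ S) ⟶ W) :=
        ((wqtHomFromBiproduct K S W).finrank_eq.trans (Module.finrank_pi_fintype K)).symm
    _ = finrank K (A ⟶ W) := ((Linear.homCongr K e (Iso.refl W)).finrank_eq).symm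

/-- the functor `Hom(R, -)` -/
noncomputable def wqtFunctor (R : C) : C ⥤ ModuleCat.{v} K where
  obj A := ModuleCat.of K (R ⟶ A)
  map f := ModuleCat.ofHom (Linear.rightComp K R f)
  map_id A := by
    ext u
    show u ≫ 𝟙 A = u
    simp
  map_comp f g := by
    ext u
    show u ≫ (f ≫ g) = (u ≫ f) ≫ g
    simp

@[simp] lemma wqtFunctor_map_apply (R : C) {A B : C} (f : A ⟶ B) (u : R ⟶ A) :
    ((wqtFunctor K R).map f).hom u = u ≫ f := rfl

instance (R : C) : (wqtFunctor K R).Additive where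
  map_add := by
    intro X Y f g
    ext u
    revert u
    show ∀ u : R ⟶ X, u ≫ (f + g) = u ≫ f + u ≫ g
    intro u
    simp

instance (R : C) : (wqtFunctor K R).Linear K where
  map_smul := by
    intro X Y f r
    ext u
    revert u
    show ∀ u : R ⟶ X, u ≫ (r • f) = r • (u ≫ f)
    intro u
    simp

lemma wqt_exists_spanning (V : Type*) [AddCommGroup V] [Module K V] [FiniteDimensional K V]
    (m n : ℕ) (h : finrank K V ≤ m * n) :
    ∃ g : Fin m → Fin n → V,
      Submodule.span K (Set.range fun st : Fin m × Fin n => g st.1 st.2) = ⊤ := by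
  classical
  let b := finBasis K V
  refine ⟨fun s t => if hlt : ((finProdFinEquiv (s, t) : Fin (m * n)) : ℕ) < finrank K V
      then b ⟨_, hlt⟩ else 0, ?_⟩
  rw [eq_top_iff, ← b.span_eq]
  refine Submodule.span_le.2 fun x hx => Submodule.subset_span ?_
  obtain ⟨k, rfl⟩ := hx
  refine ⟨finProdFinEquiv.symm ⟨(k : ℕ), lt_of_lt_of_le k.2 h⟩, ?_⟩
  have hk : ((finProdFinEquiv (finProdFinEquiv.symm
      (⟨(k : ℕ), lt_of_lt_of_le k.2 h⟩ : Fin (m * n))) : Fin (m * n)) : ℕ) < finrank K V := by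
    rw [Equiv.apply_symm_apply]; exact k.2
  simp only [Prod.mk.eta]
  rw [dif_pos hk]
  apply congrArg
  apply Fin.ext
  simp only [Equiv.apply_symm_apply]

variable [MonoidalCategory C] [MonoidalPreadditive C] [MonoidalLinear K C]

lemma wqt_smul_tensor {W X Y Z : C} (r : K) (f : W ⟶ X) (g : Y ⟶ Z) :
    (r • f) ⊗ₘ g = r • (f ⊗ₘ g) := by simp [MonoidalCategory.tensorHom_def]

lemma wqt_tensor_smul {W X Y Z : C} (r : K) (f : W ⟶ X) (g : Y ⟶ Z) :
    f ⊗ₘ (r • g) = r • (f ⊗ₘ g) := by simp [MonoidalCategory.tensorHom_def]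

/-- the lax structure maps -/
noncomputable def wqtBil (R : C) (δ : R ⟶ (R ⊗ R : C)) (A B : C) :
    (R ⟶ A) →ₗ[K] (R ⟶ B) →ₗ[K] (R ⟶ (A ⊗ B : C)) :=
  LinearMap.mk₂ K (fun (u : R ⟶ A) (v : R ⟶ B) => δ ≫ (u ⊗ₘ v))
    (fun u u' v => by simp only [MonoidalPreadditive.add_tensor, Preadditive.comp_add])
    (fun r u v => by simp only [wqt_smul_tensor, Linear.comp_smul])
    (fun u v v' => by simp only [MonoidalPreadditive.tensor_add, Preadditive.comp_add])
    (fun r u v => by simp only [wqt_tensor_smul, Linear.comp_smul])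

/-- the lax structure maps -/
noncomputable def wqtC (R : C) (δ : R ⟶ (R ⊗ R : C)) (A B : C) :
    TensorProduct K ((wqtFunctor K R).obj A) ((wqtFunctor K R).obj B) →ₗ[K]
      (wqtFunctor K R).obj (A ⊗ B) :=
  TensorProduct.lift (wqtBil K R δ A B)

@[simp] lemma wqtC_tmul (R : C) (δ : R ⟶ (R ⊗ R : C)) {A B : C} (u : R ⟶ A) (v : R ⟶ B) :
    wqtC K R δ A B (u ⊗ₜ v) = δ ≫ (u ⊗ₘ v) := rfl

lemma wqtC_natural (R : C) (δ : R ⟶ (R ⊗ R : C)) {A A' B B' : C} (f : A ⟶ A') (g : B ⟶ B') :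
    LinearMap.comp ((wqtFunctor K R).map (MonoidalCategory.tensorHom f g)).hom (wqtC K R δ A B)
      = LinearMap.comp (wqtC K R δ A' B')
          (TensorProduct.map ((wqtFunctor K R).map f).hom ((wqtFunctor K R).map g).hom) := by
  apply TensorProduct.ext'
  intro (u : R ⟶ A) (v : R ⟶ B)
  show (δ ≫ (u ⊗ₘ v)) ≫ (f ⊗ₘ g) = wqtC K R δ A' B'
    ((u ≫ f) ⊗ₜ (v ≫ g))
  rw [wqtC_tmul, Category.assoc,
    MonoidalCategory.tensorHom_comp_tensorHom]

lemma wqt_delta_pi {σ : Type} [Fintype σ] [DecidableEq σ] (Z : σ → C)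
    (gg : ∀ p q : σ, ((⨁ Z) ⟶ (Z p ⊗ Z q : C))) (p' q' : σ) :
    (∑ p, ∑ q, gg p q ≫ (biproduct.ι Z p ⊗ₘ biproduct.ι Z q)) ≫
        (biproduct.π Z p' ⊗ₘ biproduct.π Z q') = gg p' q' := by
  rw [Preadditive.sum_comp, Fintype.sum_eq_single p']
  · rw [Preadditive.sum_comp, Fintype.sum_eq_single q']
    · rw [Category.assoc, MonoidalCategory.tensorHom_comp_tensorHom, biproduct.ι_π_self,
        biproduct.ι_π_self, MonoidalCategory.id_tensorHom_id, Category.comp_id]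
    · intro q hq
      rw [Category.assoc, MonoidalCategory.tensorHom_comp_tensorHom, biproduct.ι_π_ne _ hq,
        MonoidalPreadditive.tensor_zero, Limits.comp_zero]
  · intro p hp
    rw [Preadditive.sum_comp]
    apply Finset.sum_eq_zero
    intro q _
    rw [Category.assoc, MonoidalCategory.tensorHom_comp_tensorHom, biproduct.ι_π_ne _ hp,
      MonoidalPreadditive.zero_tensor, Limits.comp_zero]

end WQTAux
theorem exists_weak_quasi_tensor_functor_of_weak_dimension_function
    (K : Type w) [Field K]
    (C : Type u) [Category.{v} C] [Abelian C] [Linear K C]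
    [MonoidalCategory C] [MonoidalPreadditive C] [MonoidalLinear K C]
    (hfd : ∀ A B : C, FiniteDimensional K (A ⟶ B))
    (hss : ∀ A : C, ∃ (n : ℕ) (S : Fin n → C),
      (∀ p, Simple (S p)) ∧ Nonempty (A ≅ ⨁ S))
    (hend : ∀ Z : C, Simple Z → finrank K (Z ⟶ Z) = 1)
    (ι : Type) [Fintype ι] (X : ι → C) (hsimple : ∀ i, Simple (X i))
    (hne : ∀ i j : ι, i ≠ j → ¬ Nonempty (X i ≅ X j))
    (hcover : ∀ Z : C, Simple Z → ∃ i, Nonempty (Z ≅ X i))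
    (i₀ : ι) (hunit : Nonempty (X i₀ ≅ 𝟙_ C))
    (D : ι → ℕ) (hD1 : ∀ i, 1 ≤ D i) (hDunit : D i₀ = 1)
    (hDmul : ∀ i j, ∑ k, finrank K ((X i ⊗ X j : C) ⟶ X k) * D k ≤ D i * D j) :
    ∃ (F : C ⥤ ModuleCat.{v} K) (hadd : F.Additive),
      (haveI := hadd; F.Linear K) ∧ F.Faithful ∧
      (∀ A : C, finrank K (F.obj A) = ∑ i, finrank K (X i ⟶ A) * D i) ∧
      ∃ c : ∀ A B : C, TensorProduct K (F.obj A) (F.obj B) →ₗ[K] F.obj (A ⊗ B),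
        (∀ A B : C, Function.Surjective (c A B)) ∧
        (∀ {A A' B B' : C} (f : A ⟶ A') (g : B ⟶ B'),
          LinearMap.comp (F.map (MonoidalCategory.tensorHom f g)).hom (c A B)
            = LinearMap.comp (c A' B') (TensorProduct.map (F.map f).hom (F.map g).hom)) ∧
        (∀ A : C, Function.Bijective (c (𝟙_ C) A)) ∧
        (∀ A : C, Function.Bijective (c A (𝟙_ C))) := by
  classical
  -- the representing object
  let Z : (Σ i : ι, Fin (D i)) → C := fun p => X p.1
  let R : C := ⨁ Z
  -- decomposition of an arbitrary object through the chosen simples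
  have hdecomp : ∀ A : C, ∃ (n : ℕ) (Y : Fin n → ι) (α : ∀ p, (X (Y p) ⟶ A))
      (β : ∀ p, (A ⟶ X (Y p))), ∑ p, β p ≫ α p = 𝟙 A := by
    intro A
    obtain ⟨n, S, hS, ⟨e⟩⟩ := hss A
    choose iS φS using fun p => hcover (S p) (hS p)
    refine ⟨n, iS, fun p => (φS p).some.inv ≫ biproduct.ι S p ≫ e.inv,
      fun p => e.hom ≫ biproduct.π S p ≫ (φS p).some.hom, ?_⟩
    have step : ∀ p : Fin n, (e.hom ≫ biproduct.π S p ≫ (φS p).some.hom) ≫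
        ((φS p).some.inv ≫ biproduct.ι S p ≫ e.inv)
        = e.hom ≫ ((biproduct.π S p ≫ biproduct.ι S p) ≫ e.inv) := by
      intro p; simp
    rw [Finset.sum_congr rfl fun p _ => step p, ← Preadditive.comp_sum,
      ← Preadditive.sum_comp, biproduct.total]
    simp
  -- every map from a chosen simple is detected by R
  have hdetect : ∀ {A B : C} (f f' : A ⟶ B),
      (∀ u : R ⟶ A, u ≫ f = u ≫ f') → ∀ (i : ι) (u : X i ⟶ A), u ≫ f = u ≫ f' := by
    intro A B f f' h i u
    have h1 := h ((biproduct.π Z ⟨i, ⟨0, hD1 i⟩⟩ : R ⟶ X i) ≫ u)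
    have h2 := congrArg (fun t => (biproduct.ι Z ⟨i, ⟨0, hD1 i⟩⟩ : X i ⟶ R) ≫ t) h1
    simpa using h2
  -- dimension of Hom(R, A)
  have hRdim : ∀ A : C, finrank K (R ⟶ A) = ∑ i, finrank K (X i ⟶ A) * D i := by
    intro A
    haveI : ∀ p : Σ i : ι, Fin (D i), FiniteDimensional K (Z p ⟶ A) := fun p => hfd _ _
    rw [(wqtHomFromBiproduct K Z A).finrank_eq.trans (Module.finrank_pi_fintype K),
      ← Finset.univ_sigma_univ, Finset.sum_sigma]
    refine Finset.sum_congr rfl fun i _ => ?_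
    simp [Z, Finset.sum_const, mul_comm]
    exact (Finset.sum_const _).trans
      ((congrArg (· • finrank K (X i ⟶ A)) (Finset.card_fin (D i))).trans (smul_eq_mul _ _))
  have hsym : ∀ (i : ι) (A : C), finrank K (X i ⟶ A) = finrank K (A ⟶ X i) :=
    fun i A => wqt_finrank_flip K hfd hend hss (hsimple i) A
  have hRtensor : ∀ i j, finrank K (R ⟶ (X i ⊗ X j : C)) ≤ D i * D j := by
    intro i j
    rw [hRdim]
    calc ∑ k, finrank K (X k ⟶ (X i ⊗ X j : C)) * D k
        = ∑ k, finrank K ((X i ⊗ X j : C) ⟶ X k) * D k :=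
          Finset.sum_congr rfl fun k _ => by rw [hsym]
      _ ≤ D i * D j := hDmul i j
  -- choose spanning families and the comultiplication δ
  have hspan : ∀ i j, ∃ g : Fin (D i) → Fin (D j) → (R ⟶ (X i ⊗ X j : C)),
      Submodule.span K (Set.range fun st : Fin (D i) × Fin (D j) => g st.1 st.2) = ⊤ := by
    intro i j
    haveI := hfd R (X i ⊗ X j : C)
    exact wqt_exists_spanning K _ _ _ (hRtensor i j)
  choose g hg using hspan
  let δ : R ⟶ (R ⊗ R : C) :=
    ∑ p : Σ i : ι, Fin (D i), ∑ q : Σ i : ι, Fin (D i),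
      (g p.1 q.1 p.2 q.2 : R ⟶ (Z p ⊗ Z q : C)) ≫ (biproduct.ι Z p ⊗ₘ biproduct.ι Z q)
  have hδπ : ∀ p q : Σ i : ι, Fin (D i),
      δ ≫ (biproduct.π Z p ⊗ₘ biproduct.π Z q) = g p.1 q.1 p.2 q.2 :=
    fun p q => wqt_delta_pi Z (fun p q => (g p.1 q.1 p.2 q.2 : R ⟶ (Z p ⊗ Z q : C))) p q
  -- surjectivity for the chosen simples
  have hsurj_simple : ∀ i j, Function.Surjective (wqtC K R δ (X i) (X j)) := by
    intro i j
    rw [← LinearMap.range_eq_top, eq_top_iff]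
    refine le_trans (hg i j).symm.le ?_
    refine Submodule.span_le.2 ?_
    rintro x ⟨⟨s, t⟩, rfl⟩
    refine (LinearMap.mem_range (f := wqtC K R δ (X i) (X j))).2
      ⟨(biproduct.π Z ⟨i, s⟩ : R ⟶ X i) ⊗ₜ (biproduct.π Z ⟨j, t⟩ : R ⟶ X j), ?_⟩
    exact (wqtC_tmul K R δ _ _).trans (hδπ ⟨i, s⟩ ⟨j, t⟩)
  -- surjectivity in general
  have hsurjAll : ∀ A B : C, Function.Surjective (wqtC K R δ A B) := by
    intro A B (w : R ⟶ A ⊗ B)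
    refine LinearMap.mem_range.1 ?_
    obtain ⟨n, Y, α, β, hA⟩ := hdecomp A
    obtain ⟨m, Y', α', β', hB⟩ := hdecomp B
    have hw : w = ∑ p, ∑ q, (w ≫ (β p ⊗ₘ β' q)) ≫ (α p ⊗ₘ α' q) := by
      conv_lhs => rw [← Category.comp_id w, ← MonoidalCategory.id_tensorHom_id, ← hA, ← hB]
      rw [sum_tensor, Preadditive.comp_sum]
      refine Finset.sum_congr rfl fun p _ => ?_
      rw [tensor_sum, Preadditive.comp_sum]
      refine Finset.sum_congr rfl fun q _ => ?_
      rw [← MonoidalCategory.tensorHom_comp_tensorHom, ← Category.assoc]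
    rw [hw]
    refine Submodule.sum_mem _ fun p _ => Submodule.sum_mem _ fun q _ => ?_
    obtain ⟨z, hz⟩ := hsurj_simple (Y p) (Y' q) (w ≫ (β p ⊗ₘ β' q))
    refine LinearMap.mem_range.2
      ⟨TensorProduct.map ((wqtFunctor K R).map (α p)).hom ((wqtFunctor K R).map (α' q)).hom z, ?_⟩
    have hnat := DFunLike.congr_fun (wqtC_natural K R δ (α p) (α' q)) z
    rw [LinearMap.comp_apply, LinearMap.comp_apply] at hnat
    rw [← hnat, hz, wqtFunctor_map_apply]
  -- one-dimensionality of Hom(R, 𝟙)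
  haveI hsimple1 : Simple (𝟙_ C) := Simple.of_iso hunit.some.symm
  have honedim : finrank K (R ⟶ (𝟙_ C)) = 1 := by
    rw [hRdim]
    have hterm : ∀ i, finrank K (X i ⟶ (𝟙_ C)) * D i = if i = i₀ then 1 else 0 := by
      intro i
      by_cases h : i = i₀
      · subst h
        rw [if_pos rfl, wqt_finrank_hom_eq_one K hend (hsimple _) hunit.some, hDunit]
      · rw [if_neg h, wqt_finrank_hom_eq_zero K (hsimple i) hsimple1
          (fun he => hne i i₀ h ⟨he.some.trans hunit.some.symm⟩), zero_mul]
    rw [Finset.sum_congr rfl fun i _ => hterm i, Finset.sum_ite_eq' Finset.univ i₀ fun _ => 1]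
    simp
  -- assemble everything
  refine ⟨wqtFunctor K R, inferInstance, inferInstance, ?_, ?_, wqtC K R δ,
    hsurjAll, fun f g' => wqtC_natural K R δ f g', ?_, ?_⟩
  · -- faithful
    refine ⟨?_⟩
    intro A B f f' h
    have h' : ∀ u : R ⟶ A, u ≫ f = u ≫ f' := fun u => DFunLike.congr_fun (congrArg ModuleCat.Hom.hom h) u
    have key := hdetect f f' h'
    obtain ⟨n, Y, α, β, hA⟩ := hdecomp A
    rw [← Category.id_comp f, ← Category.id_comp f', ← hA, Preadditive.sum_comp,
      Preadditive.sum_comp]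
    exact Finset.sum_congr rfl fun p _ => by
      rw [Category.assoc, Category.assoc, key (Y p) (α p)]
  · -- dimension formula
    intro A
    exact hRdim A
  · -- left unit bijective
    intro A
    haveI : FiniteDimensional K ((wqtFunctor K R).obj (𝟙_ C)) := hfd R (𝟙_ C)
    haveI : FiniteDimensional K ((wqtFunctor K R).obj A) := hfd R A
    haveI : FiniteDimensional K ((wqtFunctor K R).obj ((𝟙_ C) ⊗ A)) :=
      hfd R ((𝟙_ C) ⊗ A : C)
    have hdim : finrank K (TensorProduct K ((wqtFunctor K R).obj (𝟙_ C))
        ((wqtFunctor K R).obj A)) = finrank K ((wqtFunctor K R).obj ((𝟙_ C) ⊗ A)) := by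
      show finrank K (TensorProduct K (R ⟶ (𝟙_ C)) (R ⟶ A))
          = finrank K (R ⟶ ((𝟙_ C) ⊗ A : C))
      rw [Module.finrank_tensorProduct, honedim, one_mul]
      exact (Linear.homCongr K (Iso.refl R) (λ_ A)).finrank_eq.symm
    exact ⟨(LinearMap.injective_iff_surjective_of_finrank_eq_finrank hdim).2
      (hsurjAll _ _), hsurjAll _ _⟩
  · -- right unit bijective
    intro A
    haveI : FiniteDimensional K ((wqtFunctor K R).obj (𝟙_ C)) := hfd R (𝟙_ C)
    haveI : FiniteDimensional K ((wqtFunctor K R).obj A) := hfd R A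
    haveI : FiniteDimensional K ((wqtFunctor K R).obj (A ⊗ (𝟙_ C))) :=
      hfd R (A ⊗ (𝟙_ C) : C)
    have hdim : finrank K (TensorProduct K ((wqtFunctor K R).obj A)
        ((wqtFunctor K R).obj (𝟙_ C))) = finrank K ((wqtFunctor K R).obj (A ⊗ (𝟙_ C))) := by
      show finrank K (TensorProduct K (R ⟶ A) (R ⟶ (𝟙_ C)))
          = finrank K (R ⟶ (A ⊗ (𝟙_ C) : C))
      rw [Module.finrank_tensorProduct, honedim, mul_one]
      exact (Linear.homCongr K (Iso.refl R) (ρ_ A)).finrank_eq.symm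
    exact ⟨(LinearMap.injective_iff_surjective_of_finrank_eq_finrank hdim).2
      (hsurjAll _ _), hsurjAll _ _⟩
end

section
/- Let X and Y be non-isomorphic simple objects of C. Then there is no K-linear isomorphism φ : F(X) → F(Y) satisfying φ ∘ η_X = η_Y ∘ φ for every natural transformation η : F ⟶ F. (Inequivalent irreducible objects yield inequivalent modules over the algebra of natural endomorphisms of F.) -/
open CategoryTheory CategoryTheory.Limits Module

attribute [local instance] CategoryTheory.Abelian.hasFiniteBiproducts

universe v u w

theorem no_equivariant_iso_between_inequivalent_simples
    (K : Type w) [Field K]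
    (C : Type u) [Category.{v} C] [Abelian C] [Linear K C]
    (hfd : ∀ A B : C, FiniteDimensional K (A ⟶ B))
    (hss : ∀ A : C, ∃ (n : ℕ) (S : Fin n → C),
      (∀ p, Simple (S p)) ∧ Nonempty (A ≅ ⨁ S))
    (F : C ⥤ ModuleCat.{w} K) [F.Additive] [F.Linear K] [F.Faithful]
    (X Y : C) [Simple X] [Simple Y] (hXY : ¬ Nonempty (X ≅ Y)) :
    ¬ ∃ φ : F.obj X ≃ₗ[K] F.obj Y,
        ∀ η : F ⟶ F, φ.toLinearMap.comp (η.app X).hom = (η.app Y).hom.comp φ.toLinearMap := by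
  classical
  rintro ⟨φ, hφ⟩
  choose n S hS hi using hss
  have i : ∀ A : C, A ≅ ⨁ S A := fun A => (hi A).some
  -- idempotent d on each simple summand
  let d : ∀ A : C, ∀ p : Fin (n A), S A p ⟶ S A p :=
    fun A p => if Nonempty (S A p ≅ X) then 𝟙 _ else 0
  let pj : ∀ A : C, A ⟶ A := fun A => (i A).hom ≫ biproduct.map (d A) ≫ (i A).inv
  -- Schur-type commutation
  have schur : ∀ {U V : C} [Simple U] [Simple V] (g : U ⟶ V),
      (if Nonempty (U ≅ X) then (𝟙 U) else 0) ≫ g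
        = g ≫ (if Nonempty (V ≅ X) then (𝟙 V) else 0) := by
    intro U V _ _ g
    by_cases hg : g = 0
    · simp [hg]
    · haveI := isIso_of_hom_simple hg
      have hUV : Nonempty (U ≅ X) ↔ Nonempty (V ≅ X) :=
        ⟨fun ⟨e⟩ => ⟨(asIso g).symm ≪≫ e⟩, fun ⟨e⟩ => ⟨asIso g ≪≫ e⟩⟩
      by_cases h : Nonempty (U ≅ X)
      · simp [h, hUV.mp h]
      · have hV : ¬ Nonempty (V ≅ X) := fun hv => h (hUV.mpr hv)
        simp [h, hV]
  -- naturality of pj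
  have nat : ∀ {A B : C} (f : A ⟶ B), pj A ≫ f = f ≫ pj B := by
    intro A B f
    have h : biproduct.map (d A) ≫ ((i A).inv ≫ f ≫ (i B).hom)
        = ((i A).inv ≫ f ≫ (i B).hom) ≫ biproduct.map (d B) := by
      apply biproduct.hom_ext
      intro q
      apply biproduct.hom_ext'
      intro p
      haveI := hS A p
      haveI := hS B q
      simp only [Category.assoc, biproduct.map_π, biproduct.ι_map_assoc]
      simpa [d] using schur (biproduct.ι (S A) p ≫ ((i A).inv ≫ f ≫ (i B).hom) ≫ biproduct.π (S B) q)
    calc pj A ≫ f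
        = (i A).hom ≫ (biproduct.map (d A) ≫ ((i A).inv ≫ f ≫ (i B).hom)) ≫ (i B).inv := by
          simp [pj]
      _ = (i A).hom ≫ (((i A).inv ≫ f ≫ (i B).hom) ≫ biproduct.map (d B)) ≫ (i B).inv := by
          rw [h]
      _ = f ≫ pj B := by simp [pj]
  -- the natural endomorphism of F
  let η : F ⟶ F :=
    { app := fun A => F.map (pj A)
      naturality := fun A B f => by
        rw [← F.map_comp, ← F.map_comp, nat f] }
  -- every summand of X is iso to X
  have hdX : ∀ p, d X p = 𝟙 (S X p) := by
    intro p
    haveI := hS X p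
    have hne : (biproduct.ι (S X) p ≫ (i X).inv) ≠ 0 := by
      intro h0
      have : biproduct.ι (S X) p ≫ biproduct.π (S X) p = 0 := by
        have := congrArg (fun g => g ≫ ((i X).hom ≫ biproduct.π (S X) p)) h0
        simpa using this
      rw [biproduct.ι_π_self] at this
      exact id_nonzero (S X p) this
    haveI := isIso_of_hom_simple hne
    have : Nonempty (S X p ≅ X) := ⟨asIso (biproduct.ι (S X) p ≫ (i X).inv)⟩
    simp [d, this]
  -- every summand of Y is iso to Y, hence not iso to X
  have hdY : ∀ p, d Y p = 0 := by
    intro p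
    haveI := hS Y p
    have hne : (biproduct.ι (S Y) p ≫ (i Y).inv) ≠ 0 := by
      intro h0
      have : biproduct.ι (S Y) p ≫ biproduct.π (S Y) p = 0 := by
        have := congrArg (fun g => g ≫ ((i Y).hom ≫ biproduct.π (S Y) p)) h0
        simpa using this
      rw [biproduct.ι_π_self] at this
      exact id_nonzero (S Y p) this
    haveI := isIso_of_hom_simple hne
    have hno : ¬ Nonempty (S Y p ≅ X) := by
      rintro ⟨e⟩
      exact hXY ⟨e.symm ≪≫ (asIso (biproduct.ι (S Y) p ≫ (i Y).inv))⟩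
    simp [d, hno]
  have hpX : pj X = 𝟙 X := by
    have : biproduct.map (d X) = 𝟙 (⨁ S X) := by
      apply biproduct.hom_ext
      intro q
      simp [hdX q]
    simp [pj, this]
  have hpY : pj Y = 0 := by
    have : biproduct.map (d Y) = 0 := by
      apply biproduct.hom_ext
      intro q
      simp [hdY q]
    simp [pj, this]
  -- compute η on X and Y
  have hηX : η.app X = 𝟙 (F.obj X) := by
    show F.map (pj X) = _
    rw [hpX, F.map_id]
  have hηY : η.app Y = 0 := by
    show F.map (pj Y) = _
    rw [hpY, F.map_zero]
  have h0 : φ.toLinearMap = 0 := by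
    have := hφ η
    rw [hηX, hηY] at this
    simpa using this
  -- derive contradiction
  have hsub : Subsingleton (F.obj X) := by
    constructor
    intro a b
    have ha : φ a = 0 := by simpa using DFunLike.congr_fun h0 a
    have hb : φ b = 0 := by simpa using DFunLike.congr_fun h0 b
    exact φ.injective (ha.trans hb.symm)
  have : (𝟙 X : X ⟶ X) = 0 := by
    apply F.map_injective
    rw [F.map_zero, F.map_id]
    ext x
    exact hsub.elim _ _
  exact id_nonzero X this
end

section
/- For all objects X and Y of C, every K-linear map T : F(X) → F(Y) satisfying T ∘ η_X = η_Y ∘ T for all natural transformations η : F ⟶ F is of the form T = F(f) for some morphism f : X ⟶ Y. (The induced functor into modules over the algebra of natural endomorphisms of F is full.) -/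
open CategoryTheory CategoryTheory.Limits Module

attribute [local instance] CategoryTheory.Abelian.hasFiniteBiproducts

universe v u w

/-- A linear endomorphism of a vector space commuting with all linear endomorphisms
is a scalar. -/
lemma scalar_of_comm_all {K : Type w} [Field K] {V : Type w} [AddCommGroup V] [Module K V]
    (σ : V →ₗ[K] V) (h : ∀ ψ : V →ₗ[K] V, ψ.comp σ = σ.comp ψ) :
    ∃ c : K, σ = c • LinearMap.id := by
  by_cases hV : ∀ v : V, v = 0
  · refine ⟨0, ?_⟩
    ext v
    simp [hV v, hV (σ v)]
  · push_neg at hV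
    obtain ⟨v₀, hv₀⟩ := hV
    obtain ⟨q, hq⟩ := (Submodule.span K {v₀}).exists_isCompl
    let l : V →ₗ[K] K :=
      ((LinearEquiv.toSpanNonzeroSingleton K V v₀ hv₀).symm.toLinearMap).comp
        ((Submodule.span K {v₀}).linearProjOfIsCompl q hq)
    have hl : l v₀ = 1 := by
      have h1 : ((Submodule.span K {v₀}).linearProjOfIsCompl q hq) v₀
          = (⟨v₀, Submodule.mem_span_singleton_self v₀⟩ : Submodule.span K {v₀}) :=
        Submodule.linearProjOfIsCompl_apply_left hq ⟨v₀, Submodule.mem_span_singleton_self v₀⟩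
      have h2 : (LinearEquiv.toSpanNonzeroSingleton K V v₀ hv₀) 1
          = (⟨v₀, Submodule.mem_span_singleton_self v₀⟩ : Submodule.span K {v₀}) := by
        apply Subtype.ext
        simp [LinearEquiv.toSpanNonzeroSingleton_apply]
      simp only [l, LinearMap.comp_apply, h1, LinearEquiv.coe_coe]
      rw [← h2, LinearEquiv.symm_apply_apply]
    refine ⟨l (σ v₀), ?_⟩
    ext w
    have hcomm := h (l.smulRight w)
    have := congrArg (fun (t : V →ₗ[K] V) => t v₀) hcomm
    simp only [LinearMap.comp_apply, LinearMap.smulRight_apply, hl, one_smul] at this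
    simpa using this.symm

namespace EquivAux

variable {K : Type w} [Field K]
variable {C : Type u} [Category.{v} C] [Abelian C] [CategoryTheory.Linear K C]

/-- A dual system: a decomposition of `Z` into simple objects given by
inclusion/projection data. -/
structure DSys (Z : C) where
  n : ℕ
  S : Fin n → C
  simple : ∀ i, Simple (S i)
  a : ∀ i, S i ⟶ Z
  b : ∀ i, Z ⟶ S i
  pair : ∀ i, a i ≫ b i = 𝟙 (S i)
  orth : ∀ i j, i ≠ j → a i ≫ b j = 0
  total : ∑ i, b i ≫ a i = 𝟙 Z

lemma exists_dsys
    (hss : ∀ A : C, ∃ (n : ℕ) (S : Fin n → C),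
      (∀ p, Simple (S p)) ∧ Nonempty (A ≅ ⨁ S)) (Z : C) :
    Nonempty (DSys Z) := by
  obtain ⟨n, S, hs, ⟨e⟩⟩ := hss Z
  refine ⟨⟨n, S, hs, fun i => biproduct.ι S i ≫ e.inv, fun i => e.hom ≫ biproduct.π S i,
    ?_, ?_, ?_⟩⟩
  · intro i
    simp [biproduct.ι_π_self]
  · intro i j hij
    simp [biproduct.ι_π_ne S hij]
  · simp only [Category.assoc]
    rw [← Preadditive.comp_sum]
    have h1 : ∑ i, biproduct.π S i ≫ biproduct.ι S i ≫ e.inv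
        = (∑ i, biproduct.π S i ≫ biproduct.ι S i) ≫ e.inv := by
      rw [Preadditive.sum_comp]
      simp [Category.assoc]
    rw [h1, biproduct.total, Category.id_comp, e.hom_inv_id]

variable (F : C ⥤ ModuleCat.{w} K) [F.Additive] [F.Linear K]

/-- A family of endomorphisms of `F` coherent on simple objects. -/
structure Coh where
  φ : ∀ A : C, F.obj A ⟶ F.obj A
  nat : ∀ (A B : C) [Simple A] [Simple B] (h : A ⟶ B),
    F.map h ≫ φ B = φ A ≫ F.map h

variable {F}

def Coh.sum (c : Coh F) {Z : C} (D : DSys Z) : F.obj Z ⟶ F.obj Z :=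
  ∑ i, F.map (D.b i) ≫ c.φ (D.S i) ≫ F.map (D.a i)

lemma Coh.core (c : Coh F) {Z W : C} (h : Z ⟶ W) (D : DSys Z) (E : DSys W) :
    F.map h ≫ c.sum E = c.sum D ≫ F.map h := by
  have hb : ∀ j, h ≫ E.b j = ∑ i, D.b i ≫ (D.a i ≫ h ≫ E.b j) := by
    intro j
    calc h ≫ E.b j = (𝟙 Z) ≫ (h ≫ E.b j) := by rw [Category.id_comp]
      _ = ∑ i, D.b i ≫ (D.a i ≫ h ≫ E.b j) := by
          rw [← D.total, Preadditive.sum_comp]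
          simp [Category.assoc]
  calc F.map h ≫ c.sum E
      = ∑ j, F.map (h ≫ E.b j) ≫ c.φ (E.S j) ≫ F.map (E.a j) := by
        simp [Coh.sum, Preadditive.comp_sum, F.map_comp, Category.assoc]
    _ = ∑ j, ∑ i, F.map (D.b i) ≫ (F.map (D.a i ≫ h ≫ E.b j) ≫ c.φ (E.S j)) ≫ F.map (E.a j) := by
        refine Finset.sum_congr rfl fun j _ => ?_
        conv_lhs => rw [hb j]
        rw [F.map_sum, Preadditive.sum_comp]
        refine Finset.sum_congr rfl fun i _ => ?_
        rw [F.map_comp]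
        simp only [Category.assoc]
    _ = ∑ i, ∑ j, F.map (D.b i) ≫ c.φ (D.S i) ≫ F.map ((D.a i ≫ h) ≫ (E.b j ≫ E.a j)) := by
        rw [Finset.sum_comm]
        refine Finset.sum_congr rfl fun i _ => Finset.sum_congr rfl fun j _ => ?_
        haveI := D.simple i; haveI := E.simple j
        rw [c.nat _ _ (D.a i ≫ h ≫ E.b j)]
        simp only [Category.assoc]
        congr 2
        rw [← F.map_comp]
        congr 1
        simp [Category.assoc]
    _ = ∑ i, F.map (D.b i) ≫ c.φ (D.S i) ≫ F.map (D.a i) ≫ F.map h := by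
        refine Finset.sum_congr rfl fun i _ => ?_
        rw [← Preadditive.comp_sum]
        congr 1
        rw [← Preadditive.comp_sum]
        congr 1
        rw [← F.map_sum, ← Preadditive.comp_sum, E.total, Category.comp_id,
          F.map_comp]
    _ = c.sum D ≫ F.map h := by
        simp [Coh.sum, Preadditive.sum_comp, Category.assoc]

variable (hss : ∀ A : C, ∃ (n : ℕ) (S : Fin n → C),
    (∀ p, Simple (S p)) ∧ Nonempty (A ≅ ⨁ S))

noncomputable def sysOf (Z : C) : DSys Z := (exists_dsys hss Z).some

noncomputable def Coh.toNat (c : Coh F) : F ⟶ F where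
  app Z := c.sum (sysOf hss Z)
  naturality _ _ h := c.core h _ _

lemma Coh.sum_indep (c : Coh F) {Z : C} (D : DSys Z) :
    c.sum D = (c.toNat hss).app Z := by
  have h1 := c.core (𝟙 Z) D (sysOf hss Z)
  rw [F.map_id] at h1
  rw [Category.id_comp, Category.comp_id] at h1
  exact h1.symm

def DSys.triv (Z : C) [Simple Z] : DSys Z where
  n := 1
  S := fun _ => Z
  simple := fun _ => ‹_›
  a := fun _ => 𝟙 Z
  b := fun _ => 𝟙 Z
  pair := fun _ => by simp
  orth := fun i j hij => absurd (Subsingleton.elim i j) hij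
  total := by simp

lemma Coh.app_simple (c : Coh F) (Z : C) [Simple Z] :
    (c.toNat hss).app Z = c.φ Z := by
  rw [← c.sum_indep hss (DSys.triv Z)]
  simp [Coh.sum, DSys.triv]
  exact one_smul ℕ (c.φ Z)

open scoped Classical

variable (F) in
/-- Spreading an endomorphism of `F S₀` to all objects by conjugation. -/
noncomputable def conj (S₀ : C) (ψ : F.obj S₀ ⟶ F.obj S₀) (A : C) : F.obj A ⟶ F.obj A :=
  if h : Nonempty (S₀ ≅ A) then F.map h.some.inv ≫ ψ ≫ F.map h.some.hom else 0

lemma conj_pos {S₀ A : C} (ψ : F.obj S₀ ⟶ F.obj S₀) (h : Nonempty (S₀ ≅ A)) :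
    conj F S₀ ψ A = F.map h.some.inv ≫ ψ ≫ F.map h.some.hom := by
  simp only [conj]
  rw [dif_pos h]

lemma conj_neg {S₀ A : C} (ψ : F.obj S₀ ⟶ F.obj S₀) (h : ¬ Nonempty (S₀ ≅ A)) :
    conj F S₀ ψ A = 0 := by
  simp only [conj]
  rw [dif_neg h]

lemma endo_scalar (hend : ∀ Z : C, Simple Z → finrank K (Z ⟶ Z) = 1)
    {Z : C} [Simple Z] (g : Z ⟶ Z) : ∃ c : K, g = c • 𝟙 Z := by
  obtain ⟨c, hc⟩ := (finrank_eq_one_iff_of_nonzero' (𝟙 Z) (id_nonzero Z)).mp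
    (hend Z ‹_›) g
  exact ⟨c, hc.symm⟩

lemma conj_self (hend : ∀ Z : C, Simple Z → finrank K (Z ⟶ Z) = 1)
    (S₀ : C) [Simple S₀] (ψ : F.obj S₀ ⟶ F.obj S₀) :
    conj F S₀ ψ S₀ = ψ := by
  have hne : Nonempty (S₀ ≅ S₀) := ⟨Iso.refl S₀⟩
  rw [conj_pos ψ hne]
  set e := hne.some with he
  obtain ⟨c, hc⟩ := endo_scalar hend e.hom
  have hFe : F.map e.hom = c • 𝟙 (F.obj S₀) := by
    rw [hc, F.map_smul, F.map_id]
  calc F.map e.inv ≫ ψ ≫ F.map e.hom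
      = F.map e.inv ≫ F.map e.hom ≫ ψ := by
        rw [hFe]
        simp [CategoryTheory.Linear.comp_smul, CategoryTheory.Linear.smul_comp]
    _ = ψ := by
        rw [← Category.assoc, ← F.map_comp, e.inv_hom_id, F.map_id, Category.id_comp]

lemma conj_coh (hend : ∀ Z : C, Simple Z → finrank K (Z ⟶ Z) = 1)
    (S₀ : C) [Simple S₀] (ψ : F.obj S₀ ⟶ F.obj S₀) :
    ∀ (A B : C) [Simple A] [Simple B] (h : A ⟶ B),
      F.map h ≫ conj F S₀ ψ B = conj F S₀ ψ A ≫ F.map h := by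
  intro A B _ _ h
  by_cases h0 : h = 0
  · simp [h0]
  · haveI : IsIso h := isIso_of_hom_simple h0
    by_cases hA : Nonempty (S₀ ≅ A)
    · have hB : Nonempty (S₀ ≅ B) := ⟨hA.some ≪≫ asIso h⟩
      rw [conj_pos ψ hA, conj_pos ψ hB]
      set eA := hA.some with heA
      set eB := hB.some with heB
      obtain ⟨c, hc⟩ := endo_scalar hend (eA.hom ≫ h ≫ eB.inv)
      have hh : h = c • (eA.inv ≫ eB.hom) := by
        have h1 : eA.inv ≫ (eA.hom ≫ h ≫ eB.inv) ≫ eB.hom = h := by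
          simp [Category.assoc]
        rw [← h1, hc]
        simp [CategoryTheory.Linear.comp_smul, CategoryTheory.Linear.smul_comp]
      rw [hh, F.map_smul, F.map_comp]
      rw [CategoryTheory.Linear.smul_comp, CategoryTheory.Linear.comp_smul]
      congr 1
      calc (F.map eA.inv ≫ F.map eB.hom) ≫ F.map eB.inv ≫ ψ ≫ F.map eB.hom
          = F.map eA.inv ≫ (F.map eB.hom ≫ F.map eB.inv) ≫ ψ ≫ F.map eB.hom := by
            simp [Category.assoc]
        _ = F.map eA.inv ≫ ψ ≫ F.map eB.hom := by
            rw [← F.map_comp, eB.hom_inv_id, F.map_id, Category.id_comp]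
        _ = F.map eA.inv ≫ ψ ≫ (F.map eA.hom ≫ F.map eA.inv) ≫ F.map eB.hom := by
            rw [← F.map_comp, eA.hom_inv_id, F.map_id, Category.id_comp]
        _ = (F.map eA.inv ≫ ψ ≫ F.map eA.hom) ≫ F.map eA.inv ≫ F.map eB.hom := by
            simp [Category.assoc]
    · have hB : ¬ Nonempty (S₀ ≅ B) := fun ⟨e⟩ => hA ⟨e ≪≫ (asIso h).symm⟩
      rw [conj_neg ψ hA, conj_neg ψ hB]
      simp

end EquivAux

open EquivAux

theorem equivariant_maps_come_from_morphisms
    (K : Type w) [Field K]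
    (C : Type u) [Category.{v} C] [Abelian C] [Linear K C]
    (hfd : ∀ A B : C, FiniteDimensional K (A ⟶ B))
    (hss : ∀ A : C, ∃ (n : ℕ) (S : Fin n → C),
      (∀ p, Simple (S p)) ∧ Nonempty (A ≅ ⨁ S))
    (hend : ∀ Z : C, Simple Z → finrank K (Z ⟶ Z) = 1)
    (F : C ⥤ ModuleCat.{w} K) [F.Additive] [F.Linear K] [F.Faithful]
    (X Y : C) (T : F.obj X →ₗ[K] F.obj Y)
    (hT : ∀ η : F ⟶ F, T.comp (η.app X).hom = (η.app Y).hom.comp T) :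
    ∃ f : X ⟶ Y, T = (F.map f).hom := by
  obtain ⟨D⟩ := exists_dsys hss X
  obtain ⟨E⟩ := exists_dsys hss Y
  set tT : F.obj X ⟶ F.obj Y := ModuleCat.ofHom T with htT
  have hT' : ∀ η : F ⟶ F, η.app X ≫ tT = tT ≫ η.app Y := fun η => ModuleCat.hom_ext (hT η)
  have key : ∀ i j, ∃ g : D.S i ⟶ E.S j,
      F.map (D.a i) ≫ tT ≫ F.map (E.b j) = F.map g := by
    intro i j
    haveI := D.simple i
    haveI := E.simple j
    set ρ : F.obj (D.S i) ⟶ F.obj (E.S j) := F.map (D.a i) ≫ tT ≫ F.map (E.b j) with hρ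
    have hcomm : ∀ ψ : F.obj (D.S i) ⟶ F.obj (D.S i),
        ψ ≫ ρ = ρ ≫ conj F (D.S i) ψ (E.S j) := by
      intro ψ
      set c : Coh F := ⟨conj F (D.S i) ψ, conj_coh hend (D.S i) ψ⟩ with hcdef
      set η : F ⟶ F := c.toNat hss with hη
      have happX : F.map (D.a i) ≫ η.app X = η.app (D.S i) ≫ F.map (D.a i) :=
        η.naturality (D.a i)
      have happY : F.map (E.b j) ≫ η.app (E.S j) = η.app Y ≫ F.map (E.b j) :=
        η.naturality (E.b j)
      have hSi : η.app (D.S i) = ψ := by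
        rw [hη, c.app_simple hss]
        exact conj_self hend (D.S i) ψ
      have hTj : η.app (E.S j) = conj F (D.S i) ψ (E.S j) := by
        rw [hη, c.app_simple hss]
      calc ψ ≫ ρ = (η.app (D.S i) ≫ F.map (D.a i)) ≫ tT ≫ F.map (E.b j) := by
            rw [hSi, hρ, Category.assoc]
        _ = F.map (D.a i) ≫ (η.app X ≫ tT) ≫ F.map (E.b j) := by
            rw [← happX]; simp [Category.assoc]
        _ = F.map (D.a i) ≫ tT ≫ (F.map (E.b j) ≫ η.app (E.S j)) := by
            rw [hT' η, happY]; simp [Category.assoc]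
        _ = ρ ≫ conj F (D.S i) ψ (E.S j) := by
            rw [← hTj, hρ]; simp [Category.assoc]
    by_cases hiso : Nonempty (D.S i ≅ E.S j)
    · set e := hiso.some with he
      have hσ : ∀ ψ : F.obj (D.S i) ⟶ F.obj (D.S i),
          ψ ≫ (ρ ≫ F.map e.inv) = (ρ ≫ F.map e.inv) ≫ ψ := by
        intro ψ
        have h1 := hcomm ψ
        rw [conj_pos ψ hiso] at h1
        calc ψ ≫ ρ ≫ F.map e.inv
            = (ρ ≫ F.map hiso.some.inv ≫ ψ ≫ F.map hiso.some.hom) ≫ F.map e.inv := by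
              rw [← Category.assoc, h1]
          _ = (ρ ≫ F.map e.inv) ≫ ψ := by
              rw [← he]
              simp only [Category.assoc]
              rw [← F.map_comp, e.hom_inv_id, F.map_id, Category.comp_id]
      obtain ⟨cc, hcc⟩ := scalar_of_comm_all (ρ ≫ F.map e.inv).hom
        (fun ψ => congrArg ModuleCat.Hom.hom (hσ (ModuleCat.ofHom ψ)).symm)
      refine ⟨cc • e.hom, ?_⟩
      have hsm : ModuleCat.ofHom (cc • LinearMap.id : F.obj (D.S i) →ₗ[K] F.obj (D.S i)) =
          cc • 𝟙 (F.obj (D.S i)) := rfl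
      calc F.map (D.a i) ≫ tT ≫ F.map (E.b j)
          = (ρ ≫ F.map e.inv) ≫ F.map e.hom := by
            rw [hρ, Category.assoc, ← F.map_comp, e.inv_hom_id, F.map_id,
              Category.comp_id]
        _ = (cc • 𝟙 (F.obj (D.S i))) ≫ F.map e.hom := by rw [← hsm, ← hcc, ModuleCat.ofHom_hom]
        _ = F.map (cc • e.hom) := by
            rw [F.map_smul, CategoryTheory.Linear.smul_comp, Category.id_comp]
    · refine ⟨0, ?_⟩
      have h1 := hcomm (𝟙 _)
      rw [conj_neg (𝟙 (F.obj (D.S i))) hiso, Category.id_comp, Limits.comp_zero] at h1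
      rw [h1, F.map_zero]
  choose g hg using key
  refine ⟨∑ i, ∑ j, D.b i ≫ g i j ≫ E.a j, ?_⟩
  refine congrArg ModuleCat.Hom.hom (?_ : tT = F.map _)
  calc tT = (F.map (𝟙 X)) ≫ tT ≫ (F.map (𝟙 Y)) := by
        rw [F.map_id, F.map_id, Category.id_comp, Category.comp_id]
    _ = (∑ i, F.map (D.b i ≫ D.a i)) ≫ tT ≫ (∑ j, F.map (E.b j ≫ E.a j)) := by
        rw [← F.map_sum, ← F.map_sum, D.total, E.total]
    _ = ∑ i, ∑ j, F.map (D.b i) ≫ (F.map (D.a i) ≫ tT ≫ F.map (E.b j)) ≫ F.map (E.a j) := by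
        rw [Preadditive.sum_comp]
        refine Finset.sum_congr rfl fun i _ => ?_
        rw [Preadditive.comp_sum, Preadditive.comp_sum]
        refine Finset.sum_congr rfl fun j _ => ?_
        simp [F.map_comp, Category.assoc]
    _ = F.map (∑ i, ∑ j, D.b i ≫ g i j ≫ E.a j) := by
        rw [F.map_sum]
        refine Finset.sum_congr rfl fun i _ => ?_
        rw [F.map_sum]
        refine Finset.sum_congr rfl fun j _ => ?_
        rw [hg i j]
        simp [F.map_comp, Category.assoc]
end

section
/- Let H := End(F) be the ring of natural transformations F ⟶ F under vertical composition, and regard each F(X_i) as a left H-module via η • v := η_{X_i}(v). Then every simple left H-module is isomorphic, as an H-module, to F(X_i) for some i ∈ I. (The reconstruction hits every equivalence class of irreducible representations.) -/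
open CategoryTheory CategoryTheory.Limits Module

attribute [local instance] CategoryTheory.Abelian.hasFiniteBiproducts

universe v u w


/-- Over a division ring, an endomorphism can send any nonzero vector anywhere. -/
lemma exists_linearMap_apply_eq' {D : Type*} [DivisionRing D] {V : Type*} [AddCommGroup V]
    [Module D V] {v : V} (hv : v ≠ 0) (w : V) : ∃ φ : V →ₗ[D] V, φ v = w := by
  obtain ⟨g, hg⟩ := LinearMap.exists_extend
    ((LinearMap.toSpanSingleton D V w).comp
      ((LinearEquiv.toSpanNonzeroSingleton D V v hv).symm : (D ∙ v) →ₗ[D] D))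
  refine ⟨g, ?_⟩
  have := LinearMap.congr_fun hg ⟨v, Submodule.mem_span_singleton_self v⟩
  simpa [LinearEquiv.coord_self D V v hv] using this

lemma aux_simple_iso {R : Type*} [Ring R] {ι : Type*} [Fintype ι]
    (V : ι → Type*) [∀ i, AddCommGroup (V i)] [∀ i, Module R (V i)]
    [∀ i, IsSimpleModule R (V i)]
    (Φ : R →ₗ[R] ∀ i, V i) (hΦ : Function.Injective Φ)
    (M : Type*) [AddCommGroup M] [Module R M] [IsSimpleModule R M] :
    ∃ i, Nonempty (V i ≃ₗ[R] M) := by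
  classical
  have hss : ∀ i, IsSemisimpleModule R (V i) := by
    intro i
    apply IsSemisimpleModule.of_sSup_simples_eq_top
    refine top_unique (le_sSup ?_)
    exact IsSimpleModule.congr (Submodule.topEquiv : (⊤ : Submodule R (V i)) ≃ₗ[R] V i)
  haveI hsemi : IsSemisimpleModule R (∀ i, V i) := by
    apply isSemisimpleModule_of_isSemisimpleModule_submodule'
      (p := fun i => LinearMap.range (LinearMap.single R V i))
    · intro i
      haveI := hss i
      exact IsSemisimpleModule.congr
        ((LinearEquiv.ofInjective (LinearMap.single R V i)
          (Pi.single_injective i)).symm)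
    · exact LinearMap.iSup_range_single R V
  haveI := IsSimpleModule.nontrivial R M
  obtain ⟨m, hm⟩ := exists_ne (0 : M)
  let ψ : R →ₗ[R] M :=
    { toFun := fun r => r • m
      map_add' := fun a b => add_smul a b m
      map_smul' := fun a b => mul_smul a b m }
  have hψ : Function.Surjective ψ := by
    have hr : LinearMap.range ψ ≠ ⊥ := by
      intro h
      apply hm
      have : ψ 1 ∈ LinearMap.range ψ := ⟨1, rfl⟩
      rw [h] at this
      simpa [ψ] using this
    have := (eq_bot_or_eq_top (LinearMap.range ψ)).resolve_left hr
    exact LinearMap.range_eq_top.mp this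
  obtain ⟨N', hN'⟩ := exists_isCompl (LinearMap.range Φ)
  let proj := (LinearMap.range Φ).projectionOnto N' hN'
  let eR : R ≃ₗ[R] LinearMap.range Φ := LinearEquiv.ofInjective Φ hΦ
  let g : (∀ i, V i) →ₗ[R] M := ψ ∘ₗ (eR.symm : LinearMap.range Φ →ₗ[R] R) ∘ₗ proj
  have hg : Function.Surjective g := by
    intro x
    obtain ⟨r, hr⟩ := hψ x
    refine ⟨Φ r, ?_⟩
    have h1 : proj (Φ r) = eR r := by
      apply Subtype.ext
      have := Submodule.projectionOnto_apply_left hN' (⟨Φ r, ⟨r, rfl⟩⟩ : LinearMap.range Φ)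
      simp only [proj]
      rw [this]
      rfl
    show ψ (eR.symm (proj (Φ r))) = x
    rw [h1, LinearEquiv.symm_apply_apply, hr]
  have hex : ∃ i, g ∘ₗ LinearMap.single R V i ≠ 0 := by
    by_contra h
    push_neg at h
    obtain ⟨x, hx⟩ := hg m
    apply hm
    rw [← hx]
    have hxsum : x = ∑ i, Pi.single i (x i) := by
      rw [Finset.univ_sum_single]
    rw [hxsum, map_sum]
    refine Finset.sum_eq_zero fun i _ => ?_
    have := LinearMap.congr_fun (h i) (x i)
    simpa using this
  obtain ⟨i, hi⟩ := hex
  set h := g ∘ₗ LinearMap.single R V i with hdef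
  have hker : LinearMap.ker h = ⊥ :=
    (eq_bot_or_eq_top (LinearMap.ker h)).resolve_right fun h' => hi (LinearMap.ker_eq_top.mp h')
  have hrange : LinearMap.range h = ⊤ :=
    (eq_bot_or_eq_top (LinearMap.range h)).resolve_left fun h' => hi (LinearMap.range_eq_bot.mp h')
  exact ⟨i, ⟨LinearEquiv.ofBijective h ⟨LinearMap.ker_eq_bot.mp hker, LinearMap.range_eq_top.mp hrange⟩⟩⟩

section Cat

variable {K : Type w} [Field K]
variable {C : Type u} [Category.{v} C] [Abelian C] [Linear K C]
variable {ι : Type} [Fintype ι] {X : ι → C}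

/-- Decomposition of an arbitrary object through the simple objects `X i`. -/
lemma decomp_aux
    (hss : ∀ A : C, ∃ (n : ℕ) (S : Fin n → C),
      (∀ p, Simple (S p)) ∧ Nonempty (A ≅ ⨁ S))
    (hcover : ∀ Z : C, Simple Z → ∃ i, Nonempty (Z ≅ X i)) (A : C) :
    ∃ (n : ℕ) (κ : Fin n → ι) (a : ∀ p, A ⟶ X (κ p)) (b : ∀ p, X (κ p) ⟶ A),
      (∑ p, a p ≫ b p) = 𝟙 A := by
  obtain ⟨n, S, hS, ⟨e⟩⟩ := hss A
  choose κ hκ using fun p => hcover (S p) (hS p)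
  have u : ∀ p, S p ≅ X (κ p) := fun p => (hκ p).some
  refine ⟨n, κ, fun p => e.hom ≫ biproduct.π S p ≫ (u p).hom,
    fun p => (u p).inv ≫ biproduct.ι S p ≫ e.inv, ?_⟩
  have h1 : ∀ p : Fin n,
      (e.hom ≫ biproduct.π S p ≫ (u p).hom) ≫ ((u p).inv ≫ biproduct.ι S p ≫ e.inv)
      = e.hom ≫ (biproduct.π S p ≫ biproduct.ι S p) ≫ e.inv := by
    intro p; simp
  rw [Finset.sum_congr rfl fun p _ => h1 p]
  have : ∑ p : Fin n, e.hom ≫ (biproduct.π S p ≫ biproduct.ι S p) ≫ e.inv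
      = e.hom ≫ (∑ p : Fin n, biproduct.π S p ≫ biproduct.ι S p) ≫ e.inv := by
    rw [Preadditive.sum_comp, Preadditive.comp_sum]
  rw [this, biproduct.total]
  simp

end Cat

section Cat2

set_option linter.unusedSectionVars false

variable {K : Type w} [Field K]
variable {C : Type u} [Category.{v} C] [Abelian C] [Linear K C]
variable {ι : Type} [Fintype ι] {X : ι → C}
variable (F : C ⥤ ModuleCat.{w} K) [F.Additive]

lemma natTrans_eq_zero_of_app_X
    (hss : ∀ A : C, ∃ (n : ℕ) (S : Fin n → C),
      (∀ p, Simple (S p)) ∧ Nonempty (A ≅ ⨁ S))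
    (hcover : ∀ Z : C, Simple Z → ∃ i, Nonempty (Z ≅ X i))
    (η : F ⟶ F) (h : ∀ i, η.app (X i) = 0) : η = 0 := by
  apply NatTrans.ext
  funext A
  obtain ⟨n, κ, a, b, hab⟩ := decomp_aux hss hcover A
  show η.app A = 0
  have h1 : η.app A = 𝟙 (F.obj A) ≫ η.app A := (Category.id_comp _).symm
  rw [h1, ← F.map_id, ← hab, F.map_sum, Preadditive.sum_comp]
  refine Finset.sum_eq_zero fun p _ => ?_
  rw [F.map_comp, Category.assoc, η.naturality (b p), ← Category.assoc, h (κ p)]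
  simp

lemma exists_natTrans
    (hss : ∀ A : C, ∃ (n : ℕ) (S : Fin n → C),
      (∀ p, Simple (S p)) ∧ Nonempty (A ≅ ⨁ S))
    (hsimple : ∀ i, Simple (X i))
    (hne : ∀ i j : ι, i ≠ j → ¬ Nonempty (X i ≅ X j))
    (hcover : ∀ Z : C, Simple Z → ∃ i, Nonempty (Z ≅ X i))
    (φ : ∀ i, F.obj (X i) ⟶ F.obj (X i))
    (hφ : ∀ i (u : X i ⟶ X i), F.map u ≫ φ i = φ i ≫ F.map u) :
    ∃ η : CategoryTheory.End F, ∀ i, η.app (X i) = φ i := by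
  haveI := hsimple
  have key : ∀ {i j : ι} (g : X i ⟶ X j), F.map g ≫ φ j = φ i ≫ F.map g := by
    intro i j g
    by_cases hij : i = j
    · subst hij; exact hφ i g
    · have hg : g = 0 := by
        by_contra hg
        haveI := isIso_of_hom_simple hg
        exact hne i j hij ⟨asIso g⟩
      rw [hg, F.map_zero, zero_comp, comp_zero]
  choose n κ a b hab using fun A => decomp_aux (X := X) hss hcover A
  refine ⟨{ app := fun A => ∑ p, F.map (a A p) ≫ φ (κ A p) ≫ F.map (b A p),
            naturality := ?_ }, ?_⟩
  · intro A B f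
    have LHS : F.map f ≫ ∑ q, F.map (a B q) ≫ φ (κ B q) ≫ F.map (b B q)
        = ∑ q, ∑ p, F.map (a A p) ≫
            (F.map (b A p ≫ f ≫ a B q) ≫ φ (κ B q)) ≫ F.map (b B q) := by
      rw [Preadditive.comp_sum]
      refine Finset.sum_congr rfl fun q _ => ?_
      have e0 : f ≫ a B q = ∑ p, a A p ≫ (b A p ≫ f ≫ a B q) :=
        calc f ≫ a B q = 𝟙 A ≫ f ≫ a B q := by rw [Category.id_comp]
          _ = (∑ p, a A p ≫ b A p) ≫ f ≫ a B q := by rw [hab A]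
          _ = ∑ p, a A p ≫ (b A p ≫ f ≫ a B q) := by
              rw [Preadditive.sum_comp]
              exact Finset.sum_congr rfl fun p _ => by rw [Category.assoc]
      have e1 : F.map f ≫ F.map (a B q)
          = ∑ p, F.map (a A p) ≫ F.map (b A p ≫ f ≫ a B q) :=
        calc F.map f ≫ F.map (a B q) = F.map (f ≫ a B q) := (F.map_comp _ _).symm
          _ = F.map (∑ p, a A p ≫ (b A p ≫ f ≫ a B q)) := congrArg _ e0
          _ = ∑ p, F.map (a A p ≫ (b A p ≫ f ≫ a B q)) := F.map_sum _ _
          _ = ∑ p, F.map (a A p) ≫ F.map (b A p ≫ f ≫ a B q) :=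
              Finset.sum_congr rfl fun p _ => F.map_comp _ _
      calc F.map f ≫ F.map (a B q) ≫ φ (κ B q) ≫ F.map (b B q)
          = (F.map f ≫ F.map (a B q)) ≫ φ (κ B q) ≫ F.map (b B q) := by
            rw [Category.assoc]
        _ = (∑ p, F.map (a A p) ≫ F.map (b A p ≫ f ≫ a B q)) ≫
              φ (κ B q) ≫ F.map (b B q) := by rw [e1]
        _ = ∑ p, F.map (a A p) ≫
              (F.map (b A p ≫ f ≫ a B q) ≫ φ (κ B q)) ≫ F.map (b B q) := by
            rw [Preadditive.sum_comp]
            exact Finset.sum_congr rfl fun p _ => by simp only [Category.assoc]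
    have RHS : (∑ p, F.map (a A p) ≫ φ (κ A p) ≫ F.map (b A p)) ≫ F.map f
        = ∑ p, ∑ q, F.map (a A p) ≫
            (φ (κ A p) ≫ F.map (b A p ≫ f ≫ a B q)) ≫ F.map (b B q) := by
      rw [Preadditive.sum_comp]
      refine Finset.sum_congr rfl fun p _ => ?_
      have e0 : b A p ≫ f = ∑ q, (b A p ≫ f ≫ a B q) ≫ b B q :=
        calc b A p ≫ f = (b A p ≫ f) ≫ 𝟙 B := by rw [Category.comp_id]
          _ = (b A p ≫ f) ≫ ∑ q, a B q ≫ b B q := by rw [hab B]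
          _ = ∑ q, (b A p ≫ f ≫ a B q) ≫ b B q := by
              rw [Preadditive.comp_sum]
              exact Finset.sum_congr rfl fun q _ => by simp only [Category.assoc]
      have e1 : F.map (b A p) ≫ F.map f
          = ∑ q, F.map (b A p ≫ f ≫ a B q) ≫ F.map (b B q) :=
        calc F.map (b A p) ≫ F.map f = F.map (b A p ≫ f) := (F.map_comp _ _).symm
          _ = F.map (∑ q, (b A p ≫ f ≫ a B q) ≫ b B q) := congrArg _ e0
          _ = ∑ q, F.map ((b A p ≫ f ≫ a B q) ≫ b B q) := F.map_sum _ _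
          _ = ∑ q, F.map (b A p ≫ f ≫ a B q) ≫ F.map (b B q) :=
              Finset.sum_congr rfl fun q _ => F.map_comp _ _
      calc (F.map (a A p) ≫ φ (κ A p) ≫ F.map (b A p)) ≫ F.map f
          = F.map (a A p) ≫ φ (κ A p) ≫ (F.map (b A p) ≫ F.map f) := by
            simp only [Category.assoc]
        _ = F.map (a A p) ≫ φ (κ A p) ≫
              ∑ q, F.map (b A p ≫ f ≫ a B q) ≫ F.map (b B q) := by rw [e1]
        _ = ∑ q, F.map (a A p) ≫
              (φ (κ A p) ≫ F.map (b A p ≫ f ≫ a B q)) ≫ F.map (b B q) := by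
            rw [Preadditive.comp_sum, Preadditive.comp_sum]
            exact Finset.sum_congr rfl fun q _ => by simp only [Category.assoc]
    rw [LHS, RHS, Finset.sum_comm]
    refine Finset.sum_congr rfl fun p _ => Finset.sum_congr rfl fun q _ => ?_
    rw [key (b A p ≫ f ≫ a B q)]
  · intro i
    show ∑ p, F.map (a (X i) p) ≫ φ (κ (X i) p) ≫ F.map (b (X i) p) = φ i
    have e1 : ∀ p, F.map (a (X i) p) ≫ φ (κ (X i) p) ≫ F.map (b (X i) p)
        = φ i ≫ F.map (a (X i) p ≫ b (X i) p) := by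
      intro p
      rw [← Category.assoc, key (a (X i) p), Category.assoc, ← F.map_comp]
    rw [Finset.sum_congr rfl fun p _ => e1 p, ← Preadditive.comp_sum, ← F.map_sum, hab]
    simp

end Cat2
/-- An endomorphism commuting with a division-ring action `ρ`, through whose image the
`K`-action factors, sending a given nonzero vector to a given vector. -/
lemma exists_comm_endo {K : Type*} [Field K] {V : Type*} [AddCommGroup V] [Module K V]
    {D : Type*} [DivisionRing D] (ρ : D →+* Module.End K V)
    (hK : ∀ c : K, ∃ d : D, ρ d = c • (1 : Module.End K V))
    {v : V} (hv : v ≠ 0) (w : V) :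
    ∃ φ : V →ₗ[K] V, (∀ d : D, φ.comp (ρ d) = (ρ d).comp φ) ∧ φ v = w := by
  letI : Module D V := Module.compHom V ρ
  obtain ⟨φ, hφ⟩ := exists_linearMap_apply_eq' (D := D) hv w
  have hcomm : ∀ (d : D) (x : V), φ (ρ d x) = ρ d (φ x) := fun d x => φ.map_smul d x
  refine ⟨{ toFun := φ, map_add' := φ.map_add, map_smul' := ?_ },
    fun d => LinearMap.ext fun x => hcomm d x, hφ⟩
  intro c x
  obtain ⟨d, hd⟩ := hK c
  have h1 : c • x = ρ d x := by rw [hd]; rfl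
  show φ (c • x) = c • φ x
  rw [h1, hcomm, hd]
  rfl

theorem simple_modules_over_natural_endomorphisms
    (K : Type w) [Field K]
    (C : Type u) [Category.{v} C] [Abelian C] [Linear K C]
    (hfd : ∀ A B : C, FiniteDimensional K (A ⟶ B))
    (hss : ∀ A : C, ∃ (n : ℕ) (S : Fin n → C),
      (∀ p, Simple (S p)) ∧ Nonempty (A ≅ ⨁ S))
    (ι : Type) [Fintype ι] (X : ι → C) (hsimple : ∀ i, Simple (X i))
    (hne : ∀ i j : ι, i ≠ j → ¬ Nonempty (X i ≅ X j))
    (hcover : ∀ Z : C, Simple Z → ∃ i, Nonempty (Z ≅ X i))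
    (F : C ⥤ ModuleCat.{w} K) [F.Additive] [F.Linear K] [F.Faithful]
    (hFfd : ∀ i, FiniteDimensional K (F.obj (X i)))
    (M : Type w) [AddCommGroup M] [Module (CategoryTheory.End F) M]
    [IsSimpleModule (CategoryTheory.End F) M] :
    ∃ (i : ι) (e : M ≃+ F.obj (X i)),
      ∀ (η : CategoryTheory.End F) (m : M), e (η • m) = η.app (X i) (e m) := by
  classical
  haveI := hsimple
  set R := CategoryTheory.End F with hRdef
  -- each F.obj (X i) is nontrivial
  have hnontriv : ∀ i, Nontrivial (F.obj (X i)) := by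
    intro i
    by_contra h
    rw [not_nontrivial_iff_subsingleton] at h
    have h0 : (𝟙 (X i) : X i ⟶ X i) = 0 := F.map_injective
      (ModuleCat.hom_ext (LinearMap.ext fun x => Subsingleton.elim _ _))
    exact CategoryTheory.id_nonzero (X i) h0
  -- the action of End (X i) on F.obj (X i)
  let ρ : ∀ i, CategoryTheory.End (X i) →+* Module.End K (F.obj (X i)) := fun i =>
    { toFun := fun u => (F.map u).hom
      map_one' := by show (F.map (𝟙 _)).hom = _; rw [F.map_id]; rfl
      map_mul' := fun u v => by
        show (F.map (v ≫ u)).hom = _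
        rw [F.map_comp]; rfl
      map_zero' := by show (F.map 0).hom = 0; rw [F.map_zero]; rfl
      map_add' := fun u v => by show (F.map (u + v)).hom = _; rw [F.map_add]; rfl }
  have hK : ∀ i (c : K), ∃ d : CategoryTheory.End (X i),
      ρ i d = c • (1 : Module.End K (F.obj (X i))) := by
    intro i c
    refine ⟨c • 𝟙 (X i), ?_⟩
    show (F.map (c • 𝟙 (X i))).hom = _
    rw [F.map_smul, F.map_id]
    rfl
  -- the action of R = End F on each F.obj (X i)
  let ρF : ∀ i, R →+* Module.End K (F.obj (X i)) := fun i =>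
    { toFun := fun η => (η.app (X i)).hom
      map_one' := rfl
      map_mul' := fun η ξ => rfl
      map_zero' := rfl
      map_add' := fun η ξ => rfl }
  letI Vmod : ∀ i, Module R (F.obj (X i)) := fun i => Module.compHom _ (ρF i)
  have hsmul : ∀ i (η : R) (x : F.obj (X i)), η • x = η.app (X i) x := fun _ _ _ => rfl
  -- each F.obj (X i) is a simple R-module
  have hsimpleV : ∀ i, IsSimpleModule R (F.obj (X i)) := by
    intro i
    haveI := hnontriv i
    refine IsSimpleModule.mk (toIsSimpleOrder := { eq_bot_or_eq_top := ?_ })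
    intro N
    by_cases hN : N = ⊥
    · exact Or.inl hN
    right
    obtain ⟨v, hvN, hv0⟩ := Submodule.ne_bot_iff N |>.mp hN
    rw [eq_top_iff]
    intro w _
    obtain ⟨φ0, hcomm, hφv⟩ := exists_comm_endo (ρ i) (hK i) hv0 w
    let φ : F.obj (X i) ⟶ F.obj (X i) := ModuleCat.ofHom φ0
    let Φ : ∀ j, F.obj (X j) ⟶ F.obj (X j) := fun j =>
      if h : j = i then eqToHom (by rw [h]) ≫ φ ≫ eqToHom (by rw [h]) else 𝟙 _
    have hΦi : Φ i = φ := by simp [Φ]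
    have hΦcomm : ∀ j (u : X j ⟶ X j), F.map u ≫ Φ j = Φ j ≫ F.map u := by
      intro j u
      by_cases h : j = i
      · subst h
        rw [hΦi]
        exact ModuleCat.hom_ext (hcomm u)
      · simp [Φ, dif_neg h]
    obtain ⟨η, hη⟩ := exists_natTrans F hss hsimple hne hcover Φ hΦcomm
    have hmem : η • v ∈ N := N.smul_mem η hvN
    have hval : η • v = w := by
      rw [hsmul i η v, hη i, hΦi]
      exact hφv
    rwa [hval] at hmem
  -- embed R into a finite product of the modules F.obj (X i)
  haveI : ∀ i, Module.Finite K (F.obj (X i)) := hFfd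
  let σ := (i : ι) × Fin (Module.finrank K (F.obj (X i)))
  let bas : ∀ i, Basis (Fin (Module.finrank K (F.obj (X i)))) K (F.obj (X i)) :=
    fun i => Module.finBasis K (F.obj (X i))
  letI instS : ∀ s : σ, Module R (F.obj (X s.1)) := fun s => Vmod s.1
  haveI instSimp : ∀ s : σ, IsSimpleModule R (F.obj (X s.1)) := fun s => hsimpleV s.1
  let Φbig : R →ₗ[R] (∀ s : σ, F.obj (X s.1)) :=
    { toFun := fun η s => η.app (X s.1) (bas s.1 s.2)
      map_add' := fun η ξ => funext fun s => by
        show ((η + ξ).app (X s.1)) (bas s.1 s.2) = _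
        rw [NatTrans.app_add]
        rfl
      map_smul' := fun r η => funext fun s => rfl }
  have hinj : Function.Injective Φbig := by
    rw [← LinearMap.ker_eq_bot, LinearMap.ker_eq_bot']
    intro η hη
    apply natTrans_eq_zero_of_app_X F hss hcover
    intro i
    apply ModuleCat.hom_ext
    apply (bas i).ext
    intro p
    have := congrFun hη ⟨i, p⟩
    exact this
  obtain ⟨s, ⟨e0⟩⟩ := aux_simple_iso (R := R) (fun s : σ => F.obj (X s.1)) Φbig hinj M
  refine ⟨s.1, (e0.symm : M ≃ₗ[R] F.obj (X s.1)).toAddEquiv, ?_⟩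
  intro η m
  show e0.symm (η • m) = η.app (X s.1) (e0.symm m)
  rw [map_smul]
  rfl
end

section
/- For objects A, B of C define Δ(η)_{A,B} := s_{A,B} ∘ η_{A⊗B} ∘ c_{A,B} ∈ End_K(F(A) ⊗ F(B)) for every natural transformation η : F ⟶ F. Let τ : F(A) ⊗ F(B) → F(B) ⊗ F(A) be the flip of tensor factors, and define R := τ⁻¹ ∘ s_{B,A} ∘ F(β_{A,B}) ∘ c_{A,B} and R' := s_{A,B} ∘ F(β_{A,B}⁻¹) ∘ c_{B,A} ∘ τ, both in End_K(F(A) ⊗ F(B)), where β_{A,B} : A ⊗ B ≅ B ⊗ A is the braiding. Then for every natural transformation η : F ⟶ F one has R ∘ Δ(η)_{A,B} ∘ R' = τ⁻¹ ∘ Δ(η)_{B,A} ∘ τ, i.e. the coproduct is quasi-cocommutative with intertwiner R. -/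
open CategoryTheory CategoryTheory.Limits Module MonoidalCategory

universe v u w

theorem coproduct_quasi_cocommutative
    (K : Type w) [Field K]
    (C : Type u) [Category.{v} C] [Preadditive C] [Linear K C]
    [MonoidalCategory C] [BraidedCategory C]
    [MonoidalPreadditive C] [MonoidalLinear K C]
    (F : C ⥤ ModuleCat.{w} K) [F.Additive] [F.Linear K]
    (c : ∀ A B : C, TensorProduct K (F.obj A) (F.obj B) →ₗ[K] F.obj (A ⊗ B))
    (s : ∀ A B : C, F.obj (A ⊗ B) →ₗ[K] TensorProduct K (F.obj A) (F.obj B))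
    (hcs : ∀ A B : C, (c A B).comp (s A B) = LinearMap.id)
    (hnat : ∀ {A A' B B' : C} (f : A ⟶ A') (g : B ⟶ B'),
      LinearMap.comp (F.map (MonoidalCategory.tensorHom f g)).hom (c A B)
        = LinearMap.comp (c A' B') (TensorProduct.map (F.map f).hom (F.map g).hom))
    (A B : C) (η : F ⟶ F) :
    letI τ := (TensorProduct.comm K (F.obj A) (F.obj B)).toLinearMap
    letI τinv := (TensorProduct.comm K (F.obj B) (F.obj A)).toLinearMap
    letI R : Module.End K (TensorProduct K (F.obj A) (F.obj B)) :=
      τinv ∘ₗ s B A ∘ₗ (F.map (β_ A B).hom).hom ∘ₗ c A B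
    letI R' : Module.End K (TensorProduct K (F.obj A) (F.obj B)) :=
      s A B ∘ₗ (F.map (β_ A B).inv).hom ∘ₗ c B A ∘ₗ τ
    R ∘ₗ (s A B ∘ₗ (η.app (A ⊗ B)).hom ∘ₗ c A B) ∘ₗ R'
      = τinv ∘ₗ (s B A ∘ₗ (η.app (B ⊗ A)).hom ∘ₗ c B A) ∘ₗ τ := by
  have hcs' : ∀ (X Y : C) (y : F.obj (X ⊗ Y)), c X Y (s X Y y) = y := fun X Y y =>
    LinearMap.ext_iff.mp (hcs X Y) y
  have hβ : ∀ y : F.obj (B ⊗ A), (F.map (β_ A B).hom).hom ((F.map (β_ A B).inv).hom y) = y := by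
    intro y
    have h : F.map (β_ A B).inv ≫ F.map (β_ A B).hom = 𝟙 _ := by
      rw [← F.map_comp, Iso.inv_hom_id, F.map_id]
    calc (F.map (β_ A B).hom).hom ((F.map (β_ A B).inv).hom y)
        = (F.map (β_ A B).inv ≫ F.map (β_ A B).hom).hom y := rfl
      _ = y := by rw [h]; rfl
  have hη : ∀ y : F.obj (B ⊗ A),
      (η.app (A ⊗ B)).hom ((F.map (β_ A B).inv).hom y) = (F.map (β_ A B).inv).hom ((η.app (B ⊗ A)).hom y) := by
    intro y
    have h := η.naturality (β_ A B).inv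
    calc (η.app (A ⊗ B)).hom ((F.map (β_ A B).inv).hom y)
        = (F.map (β_ A B).inv ≫ η.app (A ⊗ B)).hom y := rfl
      _ = (η.app (B ⊗ A) ≫ F.map (β_ A B).inv).hom y := by rw [h]
      _ = (F.map (β_ A B).inv).hom ((η.app (B ⊗ A)).hom y) := rfl
  apply LinearMap.ext; intro x
  simp only [LinearMap.comp_apply, LinearEquiv.coe_coe]
  rw [hcs' A B, hcs' A B, hη, hβ]
end

section
/- For objects A, B, C' of C define the linear map φ := (s_{A,B} ⊗ id) ∘ s_{A⊗B,C'} ∘ F(α_{A,B,C'}⁻¹) ∘ c_{A,B⊗C'} ∘ (id ⊗ c_{B,C'}) from F(A) ⊗ (F(B) ⊗ F(C')) to (F(A) ⊗ F(B)) ⊗ F(C'), where α_{A,B,C'} : (A ⊗ B) ⊗ C' ≅ A ⊗ (B ⊗ C') is the associator of C. For a natural transformation η : F ⟶ F let L(η) := (id ⊗ s_{B,C'}) ∘ s_{A,B⊗C'} ∘ η_{A⊗(B⊗C')} ∘ c_{A,B⊗C'} ∘ (id ⊗ c_{B,C'}) ∈ End_K(F(A) ⊗ (F(B) ⊗ F(C')))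 and R(η) := (s_{A,B} ⊗ id) ∘ s_{A⊗B,C'} ∘ η_{(A⊗B)⊗C'} ∘ c_{A⊗B,C'} ∘ (c_{A,B} ⊗ id) ∈ End_K((F(A) ⊗ F(B)) ⊗ F(C')). Then for every natural transformation η : F ⟶ F one has φ ∘ L(η) = R(η) ∘ φ, i.e. the coproduct is quasi-coassociative with associator φ. -/
open CategoryTheory CategoryTheory.Limits Module MonoidalCategory

universe v u w

theorem coassoc_cancel {R M N P : Type*} [Semiring R]
    [AddCommMonoid M] [AddCommMonoid N] [AddCommMonoid P]
    [Module R M] [Module R N] [Module R P]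
    (f : M →ₗ[R] N) (g : N →ₗ[R] M) (h : P →ₗ[R] M)
    (hgf : g ∘ₗ f = LinearMap.id) : g ∘ₗ (f ∘ₗ h) = h := by
  rw [← LinearMap.comp_assoc, hgf, LinearMap.id_comp]

theorem coproduct_quasi_coassociative
    (K : Type w) [Field K]
    (C : Type u) [Category.{v} C] [Preadditive C] [Linear K C]
    [MonoidalCategory C] [MonoidalPreadditive C] [MonoidalLinear K C]
    (F : C ⥤ ModuleCat.{w} K) [F.Additive] [F.Linear K]
    (c : ∀ A B : C, TensorProduct K (F.obj A) (F.obj B) →ₗ[K] F.obj (A ⊗ B))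
    (s : ∀ A B : C, F.obj (A ⊗ B) →ₗ[K] TensorProduct K (F.obj A) (F.obj B))
    (hcs : ∀ A B : C, (c A B).comp (s A B) = LinearMap.id)
    (hnat : ∀ {A A' B B' : C} (f : A ⟶ A') (g : B ⟶ B'),
      LinearMap.comp (F.map (MonoidalCategory.tensorHom f g)).hom (c A B)
        = LinearMap.comp (c A' B') (TensorProduct.map (F.map f).hom (F.map g).hom))
    (A B Cc : C) (η : F ⟶ F) :
    letI φ : TensorProduct K (F.obj A) (TensorProduct K (F.obj B) (F.obj Cc)) →ₗ[K]
        TensorProduct K (TensorProduct K (F.obj A) (F.obj B)) (F.obj Cc) :=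
      TensorProduct.map (s A B) LinearMap.id ∘ₗ s (A ⊗ B) Cc ∘ₗ
        (F.map (α_ A B Cc).inv).hom ∘ₗ c A (B ⊗ Cc) ∘ₗ TensorProduct.map LinearMap.id (c B Cc)
    letI L : Module.End K (TensorProduct K (F.obj A) (TensorProduct K (F.obj B) (F.obj Cc))) :=
      TensorProduct.map LinearMap.id (s B Cc) ∘ₗ s A (B ⊗ Cc) ∘ₗ
        (η.app (A ⊗ (B ⊗ Cc))).hom ∘ₗ c A (B ⊗ Cc) ∘ₗ TensorProduct.map LinearMap.id (c B Cc)
    letI R : Module.End K (TensorProduct K (TensorProduct K (F.obj A) (F.obj B)) (F.obj Cc)) :=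
      TensorProduct.map (s A B) LinearMap.id ∘ₗ s (A ⊗ B) Cc ∘ₗ
        (η.app ((A ⊗ B) ⊗ Cc)).hom ∘ₗ c (A ⊗ B) Cc ∘ₗ TensorProduct.map (c A B) LinearMap.id
    φ ∘ₗ L = R ∘ₗ φ := by
  have hη : (F.map (α_ A B Cc).inv).hom ∘ₗ (η.app (A ⊗ (B ⊗ Cc))).hom
      = (η.app ((A ⊗ B) ⊗ Cc)).hom ∘ₗ (F.map (α_ A B Cc).inv).hom := by
    have h := η.naturality (α_ A B Cc).inv
    ext x
    exact congrArg (fun f => f.hom x) h.symm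
  have hmid : TensorProduct.map LinearMap.id (c B Cc) ∘ₗ
      TensorProduct.map (LinearMap.id : F.obj A →ₗ[K] F.obj A) (s B Cc) = LinearMap.id := by
    rw [← TensorProduct.map_comp, hcs, LinearMap.id_comp, TensorProduct.map_id]
  have hmid2 : TensorProduct.map (c A B) LinearMap.id ∘ₗ
      TensorProduct.map (s A B) (LinearMap.id : F.obj Cc →ₗ[K] F.obj Cc) = LinearMap.id := by
    rw [← TensorProduct.map_comp, hcs, LinearMap.id_comp, TensorProduct.map_id]
  simp only [LinearMap.comp_assoc]
  rw [coassoc_cancel _ _ _ hmid, coassoc_cancel _ _ _ (hcs A (B ⊗ Cc)),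
    coassoc_cancel _ _ _ hmid2, coassoc_cancel _ _ _ (hcs (A ⊗ B) Cc),
    ← LinearMap.comp_assoc (c A (B ⊗ Cc) ∘ₗ TensorProduct.map LinearMap.id (c B Cc))
      (η.app (A ⊗ (B ⊗ Cc))).hom (F.map (α_ A B Cc).inv).hom, hη,
    LinearMap.comp_assoc]
end

section
/- For objects A, B of C let τ : F(A) ⊗ F(B) → F(B) ⊗ F(A) be the flip of tensor factors, and define R := τ⁻¹ ∘ s_{B,A} ∘ F(β_{A,B}) ∘ c_{A,B} and R' := s_{A,B} ∘ F(β_{A,B}⁻¹) ∘ c_{B,A} ∘ τ in End_K(F(A) ⊗ F(B)), where β_{A,B} : A ⊗ B ≅ B ⊗ A is the braiding. Then R' ∘ R = s_{A,B} ∘ c_{A,B} and R ∘ R' = τ⁻¹ ∘ (s_{B,A} ∘ c_{B,A}) ∘ τ; that is, R is quasi-invertible with R'R = Δ(1) and RR' = Δ'(1), where Δ(1) = s_{A,B} ∘ c_{A,B} is the image of the identity natural transformation under the coproduct and Δ'(1) its flipped analogue. -/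
open CategoryTheory CategoryTheory.Limits Module MonoidalCategory

universe v u w

theorem R_quasi_invertible
    (K : Type w) [Field K]
    (C : Type u) [Category.{v} C] [Preadditive C] [Linear K C]
    [MonoidalCategory C] [BraidedCategory C]
    [MonoidalPreadditive C] [MonoidalLinear K C]
    (F : C ⥤ ModuleCat.{w} K) [F.Additive] [F.Linear K]
    (c : ∀ A B : C, TensorProduct K (F.obj A) (F.obj B) →ₗ[K] F.obj (A ⊗ B))
    (s : ∀ A B : C, F.obj (A ⊗ B) →ₗ[K] TensorProduct K (F.obj A) (F.obj B))
    (hcs : ∀ A B : C, (c A B).comp (s A B) = LinearMap.id)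
    (hnat : ∀ {A A' B B' : C} (f : A ⟶ A') (g : B ⟶ B'),
      LinearMap.comp (F.map (MonoidalCategory.tensorHom f g)).hom (c A B)
        = LinearMap.comp (c A' B') (TensorProduct.map (F.map f).hom (F.map g).hom))
    (A B : C) :
    letI τ := (TensorProduct.comm K (F.obj A) (F.obj B)).toLinearMap
    letI τinv := (TensorProduct.comm K (F.obj B) (F.obj A)).toLinearMap
    letI R : Module.End K (TensorProduct K (F.obj A) (F.obj B)) :=
      τinv ∘ₗ s B A ∘ₗ (F.map (β_ A B).hom).hom ∘ₗ c A B
    letI R' : Module.End K (TensorProduct K (F.obj A) (F.obj B)) :=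
      s A B ∘ₗ (F.map (β_ A B).inv).hom ∘ₗ c B A ∘ₗ τ
    R' ∘ₗ R = s A B ∘ₗ c A B ∧ R ∘ₗ R' = τinv ∘ₗ (s B A ∘ₗ c B A) ∘ₗ τ := by
  have hττ : ∀ x, (TensorProduct.comm K (F.obj A) (F.obj B)).toLinearMap
      ((TensorProduct.comm K (F.obj B) (F.obj A)).toLinearMap x) = x := by
    intro x
    induction x using TensorProduct.induction_on with
    | zero => simp
    | tmul a b => rfl
    | add a b ha hb => rw [map_add, map_add, ha, hb]
  have hττ' : ∀ x, (TensorProduct.comm K (F.obj B) (F.obj A)).toLinearMap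
      ((TensorProduct.comm K (F.obj A) (F.obj B)).toLinearMap x) = x := by
    intro x
    induction x using TensorProduct.induction_on with
    | zero => simp
    | tmul a b => rfl
    | add a b ha hb => rw [map_add, map_add, ha, hb]
  have hcs1 : ∀ x, c A B (s A B x) = x := fun x => LinearMap.congr_fun (hcs A B) x
  have hcs2 : ∀ x, c B A (s B A x) = x := fun x => LinearMap.congr_fun (hcs B A) x
  have hF1 : ∀ x, (F.map (β_ A B).inv).hom ((F.map (β_ A B).hom).hom x) = x := by
    intro x
    have h : F.map (β_ A B).hom ≫ F.map (β_ A B).inv = 𝟙 _ := by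
      rw [← F.map_comp, Iso.hom_inv_id, F.map_id]
    exact congrArg (fun f => f.hom x) h
  have hF2 : ∀ x, (F.map (β_ A B).hom).hom ((F.map (β_ A B).inv).hom x) = x := by
    intro x
    have h : F.map (β_ A B).inv ≫ F.map (β_ A B).hom = 𝟙 _ := by
      rw [← F.map_comp, Iso.inv_hom_id, F.map_id]
    exact congrArg (fun f => f.hom x) h
  constructor
  · apply LinearMap.ext; intro x
    simp only [LinearMap.comp_apply, hττ, hcs2, hF1]
  · apply LinearMap.ext; intro x
    simp only [LinearMap.comp_apply, hττ', hcs1, hF2]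
end
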